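/- arXiv:1903.04200 — 10 statements merged into one kernel-verified Lean document; each statement's English description precedes it below -/
import Mathlib

section
/- Let R be a principal ideal domain and let A be an m × n matrix over R. Then there exist an invertible m × m matrix U and an invertible n × n matrix V over R such that the matrix B = U A V is in Smith normal form, i.e. B i j = 0 whenever i ≠ j, and B i i divides B (i+1) (i+1) for each i with both indices in range. -/
/-!
Over a PID a linear map between finite free modules is diagonal in suitable bases: split the
source as the kernel plus a lift of the (free) image, and choose a basis of the target in which
the image is spanned by multiples of basis vectors. Hence `A` is equivalent to a diagonal matrix. On a diagonal matrix, the pair of entries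
`g * a, g * b` with `a, b` coprime can be replaced by `g, g * a * b` (a gcd and an lcm) by a
unimodular `2 × 2` change of rows and columns. Such a step keeps every common divisor of the
pair, so running it over the pairs `(t, s)`, `t < s`, makes the `t`-th entry divide all later
ones without losing what was achieved for earlier `t`.
-/

open Function Matrix

namespace Matrix

variable {R : Type*} [CommRing R] {m n m' n' m₁ m₂ n₁ n₂ : Type*}
  [Fintype m] [Fintype n] [DecidableEq m] [DecidableEq n]

def Equivalent (A B : Matrix m n R) : Prop :=
  ∃ (U : Matrix m m R) (V : Matrix n n R), IsUnit U.det ∧ IsUnit V.det ∧ U * A * V = B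

namespace Equivalent

theorem refl (A : Matrix m n R) : Equivalent A A :=
  ⟨1, 1, by simp, by simp, by simp⟩

theorem trans {A B C : Matrix m n R} (hAB : Equivalent A B) (hBC : Equivalent B C) :
    Equivalent A C := by
  obtain ⟨U, V, hU, hV, rfl⟩ := hAB
  obtain ⟨U', V', hU', hV', rfl⟩ := hBC
  refine ⟨U' * U, V * V', by simpa using hU'.mul hU, by simpa using hV.mul hV', ?_⟩
  simp only [Matrix.mul_assoc]

theorem submatrix [Fintype m'] [Fintype n'] [DecidableEq m'] [DecidableEq n']
    {A B : Matrix m n R} (h : Equivalent A B) (e : m' ≃ m) (f : n' ≃ n) :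
    Equivalent (A.submatrix e f) (B.submatrix e f) := by
  obtain ⟨U, V, hU, hV, rfl⟩ := h
  refine ⟨U.submatrix e e, V.submatrix f f, by simpa using hU, by simpa using hV, ?_⟩
  simp only [submatrix_mul_equiv]

variable [Fintype m₁] [Fintype m₂] [Fintype n₁] [Fintype n₂]
  [DecidableEq m₁] [DecidableEq m₂] [DecidableEq n₁] [DecidableEq n₂]

theorem fromBlocks_zero {A A' : Matrix m₁ n₁ R} (h : Equivalent A A') (D : Matrix m₂ n₂ R) :
    Equivalent (fromBlocks A 0 0 D) (fromBlocks A' 0 0 D) := by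
  obtain ⟨U, V, hU, hV, rfl⟩ := h
  refine ⟨fromBlocks U 0 0 1, fromBlocks V 0 0 1, by simpa [det_fromBlocks_zero₂₁] using hU,
    by simpa [det_fromBlocks_zero₂₁] using hV, ?_⟩
  simp [fromBlocks_multiply]

theorem of_submatrix_eq_fromBlocks (σ : m₁ ⊕ m₂ ≃ m) (τ : n₁ ⊕ n₂ ≃ n)
    {A A' : Matrix m n R} {X X' : Matrix m₁ n₁ R} {W : Matrix m₂ n₂ R}
    (hA : A.submatrix σ τ = fromBlocks X 0 0 W) (hA' : A'.submatrix σ τ = fromBlocks X' 0 0 W)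
    (h : Equivalent X X') : Equivalent A A' := by
  simpa [← hA, ← hA'] using (h.fromBlocks_zero W).submatrix σ.symm τ.symm

end Equivalent

theorem equivalent_toMatrix {M N : Type*} [AddCommGroup M] [Module R M] [AddCommGroup N]
    [Module R N] (f : M →ₗ[R] N) (bM bM' : Module.Basis n R M) (bN bN' : Module.Basis m R N) :
    Equivalent (LinearMap.toMatrix bM bN f) (LinearMap.toMatrix bM' bN' f) := by
  refine ⟨bN'.toMatrix bN, bM.toMatrix bM', ?_, ?_,
    basis_toMatrix_mul_linearMap_toMatrix_mul_basis_toMatrix _ _ _ _ f⟩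
  · have := bN'.invertibleToMatrix bN
    exact isUnit_det_of_invertible _
  · have := bM.invertibleToMatrix bM'
    exact isUnit_det_of_invertible _

theorem equivalent_gcd_lcm {g a b : R} (hab : IsCoprime a b) :
    Equivalent (diagonal ![g * a, g * b]) (diagonal ![g, g * a * b]) := by
  obtain ⟨u, v, huv⟩ := hab
  refine ⟨!![u, v; -b, a], !![1, -(v * b); 1, 1 - v * b], ?_, ?_, ?_⟩
  · rw [det_fin_two_of]
    convert isUnit_one (M := R)
    linear_combination huv
  · simp [det_fin_two_of]
  · ext i j
    fin_cases i <;> fin_cases j <;> simp [mul_apply, Fin.sum_univ_two, vecMul_diagonal]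
    · linear_combination g * huv
    · linear_combination -(v * g * b) * huv
    · ring
    · ring

end Matrix

section GcdLcm

variable {R : Type*} [CommRing R]

theorem exists_isCoprime_mul_eq [IsDomain R] [IsBezout R] (x y : R) :
    ∃ g a b, IsCoprime a b ∧ x = g * a ∧ y = g * b := by
  classical
  let _ := IsBezout.toGCDDomain R
  obtain ⟨a, b, hx, hy, hab⟩ := extract_gcd x y
  exact ⟨gcd x y, a, b, (gcd_isUnit_iff a b).1 hab, hx, hy⟩

/-- `g` is a gcd and `g * a * b` an lcm of `d i` and `d j`. -/
structure GcdLcmStep (i j : ℕ) (d d' : ℕ → R) : Prop where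
  ne : i ≠ j
  apply_of_ne : ∀ k, k ≠ i → k ≠ j → d' k = d k
  exists_eq : ∃ g a b, IsCoprime a b ∧ d i = g * a ∧ d j = g * b ∧
    d' i = g ∧ d' j = g * a * b

namespace GcdLcmStep

variable {i j : ℕ} {d d' : ℕ → R}

theorem apply_left_dvd (h : GcdLcmStep i j d d') : d' i ∣ d i := by
  obtain ⟨g, a, b, -, hi, -, hi', -⟩ := h.exists_eq
  exact ⟨a, by rw [hi, hi']⟩

theorem apply_left_dvd_apply_right (h : GcdLcmStep i j d d') : d' i ∣ d' j := by
  obtain ⟨g, a, b, -, -, -, hi', hj'⟩ := h.exists_eq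
  exact ⟨a * b, by rw [hi', hj', mul_assoc]⟩

theorem dvd_of_dvd (h : GcdLcmStep i j d d') {c : R} (hci : c ∣ d i) (hcj : c ∣ d j) :
    c ∣ d' i ∧ c ∣ d' j := by
  obtain ⟨g, a, b, ⟨u, v, huv⟩, hi, hj, hi', hj'⟩ := h.exists_eq
  have hg : d' i = u * d i + v * d j := by
    rw [hi', hi, hj]
    linear_combination -g * huv
  refine ⟨hg ▸ dvd_add (hci.mul_left u) (hcj.mul_left v), ?_⟩
  rw [hj', mul_right_comm, ← hj]
  exact hcj.mul_right a

theorem exists_of_ne [IsDomain R] [IsBezout R] (hij : i ≠ j) (d : ℕ → R) :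
    ∃ d', GcdLcmStep i j d d' := by
  obtain ⟨g, a, b, hab, hi, hj⟩ := exists_isCoprime_mul_eq (d i) (d j)
  exact ⟨update (update d i g) j (g * a * b), hij, fun k hki hkj => by simp [hki, hkj],
    g, a, b, hab, hi, hj, by simp [hij], by simp⟩

end GcdLcmStep

def GcdLcmSteps (t N : ℕ) : (ℕ → R) → (ℕ → R) → Prop :=
  Relation.ReflTransGen fun d d' =>
    ∃ i ∈ Set.Ico t N, ∃ j ∈ Set.Ico t N, GcdLcmStep i j d d'

namespace GcdLcmSteps

variable {t N : ℕ} {d d' : ℕ → R}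

theorem apply_of_notMem (h : GcdLcmSteps t N d d') {k : ℕ} (hk : k ∉ Set.Ico t N) :
    d' k = d k := by
  induction h with
  | refl => rfl
  | tail _ hstep ih =>
    obtain ⟨i, hi, j, hj, hstep⟩ := hstep
    rw [hstep.apply_of_ne k (fun h => hk (h ▸ hi)) (fun h => hk (h ▸ hj)), ih]

theorem dvd_of_dvd (h : GcdLcmSteps t N d d') {c : R} (hc : ∀ k ∈ Set.Ico t N, c ∣ d k) :
    ∀ k ∈ Set.Ico t N, c ∣ d' k := by
  induction h with
  | refl => exact hc
  | tail _ hstep ih =>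
    obtain ⟨i, hi, j, hj, hstep⟩ := hstep
    intro k hk
    obtain ⟨hci, hcj⟩ := hstep.dvd_of_dvd (ih i hi) (ih j hj)
    by_cases hki : k = i
    · exact hki ▸ hci
    by_cases hkj : k = j
    · exact hkj ▸ hcj
    rw [hstep.apply_of_ne k hki hkj]
    exact ih k hk

theorem mono {t' : ℕ} (htt' : t ≤ t') (h : GcdLcmSteps t' N d d') : GcdLcmSteps t N d d' :=
  Relation.ReflTransGen.mono (fun _ _ ⟨i, hi, j, hj, hstep⟩ =>
    ⟨i, Set.Ico_subset_Ico_left htt' hi, j, Set.Ico_subset_Ico_left htt' hj, hstep⟩) _ _ h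

end GcdLcmSteps

variable [IsDomain R] [IsBezout R]

theorem exists_gcdLcmSteps_dvd {t N : ℕ} (htN : t < N) (d : ℕ → R) :
    ∃ d', GcdLcmSteps t N d d' ∧ ∀ k ∈ Set.Ico t N, d' t ∣ d' k := by
  suffices ∀ s, t < s → s ≤ N →
      ∃ d', GcdLcmSteps t N d d' ∧ ∀ k ∈ Set.Ico t s, d' t ∣ d' k from
    this N htN le_rfl
  intro s hts hsN
  induction s, hts using Nat.le_induction with
  | base => exact ⟨d, .refl, fun k hk => by rw [Nat.eq_of_le_of_lt_succ hk.1 hk.2]⟩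
  | succ s hts ih =>
    obtain ⟨d₁, hd₁, hdvd⟩ := ih (by omega)
    obtain ⟨d₂, hstep⟩ := GcdLcmStep.exists_of_ne (by omega : t ≠ s) d₁
    refine ⟨d₂, hd₁.tail ⟨t, ⟨le_rfl, htN⟩, s, ⟨by omega, by omega⟩, hstep⟩,
      fun k hk => ?_⟩
    rcases eq_or_ne k t with rfl | hkt
    · exact dvd_rfl
    rcases Nat.lt_succ_iff_lt_or_eq.1 hk.2 with hks | rfl
    · rw [hstep.apply_of_ne k hkt (by omega)]
      exact hstep.apply_left_dvd.trans (hdvd k ⟨hk.1, hks⟩)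
    · exact hstep.apply_left_dvd_apply_right

theorem exists_gcdLcmSteps_chain {t N : ℕ} (htN : t ≤ N) (d : ℕ → R) :
    ∃ d', GcdLcmSteps t N d d' ∧ ∀ k, t ≤ k → k + 1 < N → d' k ∣ d' (k + 1) := by
  induction htN using Nat.decreasingInduction generalizing d with
  | self => exact ⟨d, .refl, fun k hk hkN => by omega⟩
  | of_succ t htN ih =>
    obtain ⟨d₁, hd₁, hdvd⟩ := exists_gcdLcmSteps_dvd htN d
    obtain ⟨d₂, hd₂, hchain⟩ := ih d₁
    refine ⟨d₂, hd₁.trans (hd₂.mono t.le_succ), fun k hk hkN => ?_⟩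
    rcases hk.eq_or_lt with rfl | hk
    · rw [hd₂.apply_of_notMem (by simp)]
      exact hd₂.dvd_of_dvd (fun l hl => hdvd l ⟨t.le_succ.trans hl.1, hl.2⟩) _
        ⟨le_rfl, hkN⟩
    · exact hchain k hk hkN

end GcdLcm

open Classical in
noncomputable def Function.Embedding.sumRangeComplEquiv {α ι : Type*} (e : α ↪ ι) :
    α ⊕ ↥(Set.range e)ᶜ ≃ ι :=
  (Equiv.sumCongr (Equiv.ofInjective e e.injective) (Equiv.refl _)).trans
    (Equiv.Set.sumCompl (Set.range e))

@[simp]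
theorem Function.Embedding.sumRangeComplEquiv_inl {α ι : Type*} (e : α ↪ ι) (a : α) :
    e.sumRangeComplEquiv (.inl a) = e a := by
  simp [Function.Embedding.sumRangeComplEquiv]

@[simp]
theorem Function.Embedding.sumRangeComplEquiv_inr {α ι : Type*} (e : α ↪ ι)
    (x : ↥(Set.range e)ᶜ) : e.sumRangeComplEquiv (.inr x) = x := by
  simp [Function.Embedding.sumRangeComplEquiv]

section RectDiagonal

variable {R : Type*} [CommRing R]

/-- The diagonal is indexed by `ℕ` so that rows `Fin m` and columns `Fin n` can share it;
the values `d k` with `min m n ≤ k` do not occur. -/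
def Matrix.rectDiagonal {m n : ℕ} (d : ℕ → R) : Matrix (Fin m) (Fin n) R :=
  of fun i j => if (i : ℕ) = j then d i else 0

theorem Matrix.rectDiagonal_submatrix_sumRangeComplEquiv {α : Type*} [DecidableEq α] {m n : ℕ}
    (e : α ↪ Fin m) (e' : α ↪ Fin n) (he : ∀ k, (e k : ℕ) = e' k) (d : ℕ → R) :
    (rectDiagonal d).submatrix e.sumRangeComplEquiv e'.sumRangeComplEquiv =
      fromBlocks (diagonal fun k => d (e k)) 0 0
        ((rectDiagonal d).submatrix Subtype.val Subtype.val) := by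
  have hrow (k : α) (q : Fin n) (hq : q ∉ Set.range e') : (e k : ℕ) ≠ q :=
    fun h => hq ⟨k, Fin.ext ((he k).symm.trans h)⟩
  have hcol (p : Fin m) (l : α) (hp : p ∉ Set.range e) : (p : ℕ) ≠ e' l :=
    fun h => hp ⟨l, Fin.ext ((he l).trans h.symm)⟩
  ext (k | ⟨p, hp⟩) (l | ⟨q, hq⟩)
  · simp [rectDiagonal, diagonal_apply, he, Fin.val_inj]
  · simp [rectDiagonal, hrow k q hq]
  · simp [rectDiagonal, hcol p l hp]
  · simp

theorem GcdLcmStep.equivalent_rectDiagonal {m n i j : ℕ} {d d' : ℕ → R}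
    (him : i < m) (hin : i < n) (hjm : j < m) (hjn : j < n) (h : GcdLcmStep i j d d') :
    Equivalent (rectDiagonal d : Matrix (Fin m) (Fin n) R) (rectDiagonal d') := by
  obtain ⟨hij, hout, g, a, b, hab, hdi, hdj, hd'i, hd'j⟩ := h
  let eM : Fin 2 ↪ Fin m :=
    Embedding.embFinTwo (a := ⟨i, him⟩) (b := ⟨j, hjm⟩) (by simpa [Fin.ext_iff] using hij)
  let eN : Fin 2 ↪ Fin n :=
    Embedding.embFinTwo (a := ⟨i, hin⟩) (b := ⟨j, hjn⟩) (by simpa [Fin.ext_iff] using hij)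
  have he (k : Fin 2) : (eM k : ℕ) = eN k := by fin_cases k <;> rfl
  have hpair (d : ℕ → R) : (fun k => d (eM k)) = ![d i, d j] := by
    funext k
    fin_cases k <;> rfl
  have hd := rectDiagonal_submatrix_sumRangeComplEquiv eM eN he d
  have hd' := rectDiagonal_submatrix_sumRangeComplEquiv eM eN he d'
  rw [hpair, hdi, hdj] at hd
  rw [hpair, hd'i, hd'j] at hd'
  refine Equivalent.of_submatrix_eq_fromBlocks _ _ hd ?_ (equivalent_gcd_lcm hab)
  rw [hd']
  congr 1
  ext ⟨p, hp⟩ q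
  simp only [submatrix_apply, rectDiagonal, of_apply]
  rw [hout p (fun h => hp ⟨0, Fin.ext h.symm⟩) (fun h => hp ⟨1, Fin.ext h.symm⟩)]

theorem GcdLcmSteps.equivalent_rectDiagonal {m n t : ℕ} {d d' : ℕ → R}
    (h : GcdLcmSteps t (min m n) d d') :
    Equivalent (rectDiagonal d : Matrix (Fin m) (Fin n) R) (rectDiagonal d') := by
  induction h with
  | refl => exact .refl _
  | tail _ hstep ih =>
    obtain ⟨i, hi, j, hj, hstep⟩ := hstep
    obtain ⟨him, hin⟩ := lt_min_iff.1 hi.2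
    obtain ⟨hjm, hjn⟩ := lt_min_iff.1 hj.2
    exact ih.trans (hstep.equivalent_rectDiagonal him hin hjm hjn)

end RectDiagonal

section Diagonalization

open Module

variable {R M N : Type*} [CommRing R] [IsDomain R] [IsPrincipalIdealRing R]
  [AddCommGroup M] [Module R M] [AddCommGroup N] [Module R N]

theorem LinearMap.exists_basis_sum_apply_eq_smul {κ ι : Type*} [Finite κ] [Finite ι]
    (φ : M →ₗ[R] N) (bM : Basis κ R M) (bN : Basis ι R N) :
    ∃ (r k : ℕ) (b : Basis (Fin r ⊕ Fin k) R M) (c : Basis ι R N) (f : Fin r ↪ ι)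
      (a : Fin r → R),
      (∀ p, φ (b (.inl p)) = a p • c (f p)) ∧ ∀ q, φ (b (.inr q)) = 0 := by
  classical
  obtain ⟨r, snf⟩ := (range φ).smithNormalForm bN
  obtain ⟨k, bK⟩ := (ker φ.rangeRestrict).basisOfPid bM
  have : Module.Projective R (range φ) := .of_basis snf.bN
  obtain ⟨s, hs⟩ := Module.projective_lifting_property φ.rangeRestrict LinearMap.id
    φ.surjective_rangeRestrict
  obtain ⟨e, -, he⟩ := φ.rangeRestrict.exact_subtype_ker_map.splitSurjectiveEquiv
    (Submodule.injective_subtype _) ⟨s, hs⟩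
  have hφ (x) : φ (e.symm x) = x.2 := by
    simpa using congrArg Subtype.val (LinearMap.congr_fun he (e.symm x))
  refine ⟨r, k, (snf.bN.prod bK).map ((LinearEquiv.prodComm R _ _).trans e.symm), snf.bM,
    snf.f, snf.a, fun p => ?_, fun q => ?_⟩
  · simp [hφ, snf.snf]
  · simp [hφ]

theorem LinearMap.exists_toMatrix_eq_rectDiagonal {m n : ℕ} (φ : M →ₗ[R] N)
    (bM : Basis (Fin n) R M) (bN : Basis (Fin m) R N) :
    ∃ (b : Basis (Fin n) R M) (c : Basis (Fin m) R N) (d : ℕ → R),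
      LinearMap.toMatrix b c φ = rectDiagonal d := by
  obtain ⟨r, k, b, c, f, a, hinl, hinr⟩ := φ.exists_basis_sum_apply_eq_smul bM bN
  have hn : r + k = n := by simpa using Fintype.card_congr (b.indexEquiv bM)
  have hr : r ≤ m := by simpa using Fintype.card_le_of_embedding f
  obtain ⟨σ, hσ⟩ := Equiv.Perm.exists_extending_pair f (Fin.castLE hr) f.injective
    (Fin.castLE_injective hr)
  let τ : Fin r ⊕ Fin k ≃ Fin n := finSumFinEquiv.trans (finCongr hn)
  refine ⟨b.reindex τ, c.reindex σ, fun p => if h : p < r then a ⟨p, h⟩ else 0, ?_⟩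
  ext i j
  obtain ⟨p | q, rfl⟩ := τ.surjective j
  · have hfp : f p = σ.symm i ↔ (i : ℕ) = p := by
      rw [Equiv.eq_symm_apply, hσ, Fin.ext_iff, Fin.val_castLE, eq_comm]
    simp only [LinearMap.toMatrix_apply, Basis.reindex_apply, Equiv.symm_apply_apply, hinl,
      map_smul, Basis.repr_reindex_apply, Basis.repr_self, Finsupp.smul_apply,
      Finsupp.single_apply, hfp]
    by_cases hip : (i : ℕ) = p <;> simp [rectDiagonal, τ, hip]
  · simp [LinearMap.toMatrix_apply, hinr, rectDiagonal, τ]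
    omega

theorem Matrix.exists_equivalent_rectDiagonal {m n : ℕ} (A : Matrix (Fin m) (Fin n) R) :
    ∃ d : ℕ → R, Equivalent A (rectDiagonal d) := by
  let φ := toLin (Pi.basisFun R (Fin n)) (Pi.basisFun R (Fin m)) A
  obtain ⟨b, c, d, h⟩ := φ.exists_toMatrix_eq_rectDiagonal (Pi.basisFun R _) (Pi.basisFun R _)
  have hA := equivalent_toMatrix φ (Pi.basisFun R _) b (Pi.basisFun R _) c
  rw [LinearMap.toMatrix_toLin, h] at hA
  exact ⟨d, hA⟩

end Diagonalization

/-- **Smith normal form over a PID.** Every `m × n` matrix over a principal ideal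
domain is equivalent to a matrix in Smith normal form. -/
theorem smith_normal_form_of_isPrincipalIdealRing
    {R : Type} [CommRing R] [IsDomain R] [IsPrincipalIdealRing R]
    {m n : ℕ} (A : Matrix (Fin m) (Fin n) R) :
    ∃ (U : Matrix (Fin m) (Fin m) R) (V : Matrix (Fin n) (Fin n) R),
      IsUnit U.det ∧ IsUnit V.det ∧
      (∀ (i : Fin m) (j : Fin n), (i : ℕ) ≠ (j : ℕ) → (U * A * V) i j = 0) ∧
      (∀ (i : ℕ) (hm : i + 1 < m) (hn : i + 1 < n),
        (U * A * V) ⟨i, by omega⟩ ⟨i, by omega⟩ ∣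
          (U * A * V) ⟨i + 1, hm⟩ ⟨i + 1, hn⟩) := by
  obtain ⟨d, hA⟩ := A.exists_equivalent_rectDiagonal
  obtain ⟨d', hsteps, hchain⟩ := exists_gcdLcmSteps_chain (Nat.zero_le (min m n)) d
  obtain ⟨U, V, hU, hV, hUAV⟩ := hA.trans hsteps.equivalent_rectDiagonal
  refine ⟨U, V, hU, hV, fun i j hij => ?_, fun i hm hn => ?_⟩
  · simp [hUAV, rectDiagonal, hij]
  · simpa [hUAV, rectDiagonal] using hchain i (Nat.zero_le i) (lt_min hm hn)
end

section
/- Let R be a principal ideal domain and let M be a finitely presented R-module. Then there exist a natural number n and elements a₁, …, aₙ of R with aᵢ dividing aᵢ₊₁ for each i < n, such that M is isomorphic as an R-module to the direct sum (R/(a₁)) ⊕ (R/(a₂)) ⊕ ⋯ ⊕ (R/(aₙ)). -/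
/-!
By the elementary divisor decomposition `M ≅ Rᶠ × ⨁ R ⧸ (pᵉ)`, the module `M` is a finite product
of cyclic modules `R ⧸ Iᵢ`; it remains to sort such a product into a decreasing chain of ideals.
For two factors, `R ⧸ I × R ⧸ J ≅ R ⧸ (I ⊔ J) × R ⧸ (I ⊓ J)`: writing `I = (g b)`, `J = (g c)`
with `u b + v c = 1`, the change of basis of `R²` with matrix `[[u, v], [-c, b]]` (determinant `1`)
carries `(g b) × (g c)` onto `(g) × (g b c)`. Inserting the factors one at a time into the chain
built so far, using this swap, gives `(a₁) ⊇ ⋯ ⊇ (aₙ)`.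
-/

universe u v

lemma Fin.antitone_cons {α : Type*} [Preorder α] {n : ℕ} {f : Fin n → α} {a : α} :
    Antitone (Fin.cons a f : Fin (n + 1) → α) ↔ (∀ j, f j ≤ a) ∧ Antitone f := by
  simpa only [antitone_iff_forall_lt, Relator.LiftFun, ge_iff_le] using Fin.liftFun_cons (· ≥ ·)

namespace Submodule

variable {R M N : Type*} [Ring R] [AddCommGroup M] [Module R M] [AddCommGroup N] [Module R N]

noncomputable def quotientProdEquiv (p : Submodule R M) (q : Submodule R N) :
    ((M × N) ⧸ p.prod q) ≃ₗ[R] (M ⧸ p) × (N ⧸ q) :=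
  (quotEquivOfEq _ _ (by rw [LinearMap.ker_prodMap, ker_mkQ, ker_mkQ])).trans <|
    (p.mkQ.prodMap q.mkQ).quotKerEquivOfSurjective <|
      p.mkQ_surjective.prodMap q.mkQ_surjective

end Submodule

section CommRing

variable {R : Type*} [CommRing R]

def bezoutLinearEquiv {u v b c : R} (h : u * b + v * c = 1) : (R × R) ≃ₗ[R] R × R where
  toFun p := (u * p.1 + v * p.2, b * p.2 - c * p.1)
  invFun p := (b * p.1 - v * p.2, c * p.1 + u * p.2)
  map_add' p q := by ext <;> simp only [Prod.fst_add, Prod.snd_add] <;> ring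
  map_smul' r p := by
    ext <;> simp only [Prod.smul_fst, Prod.smul_snd, smul_eq_mul, RingHom.id_apply] <;> ring
  left_inv p := Prod.ext (by linear_combination p.1 * h) (by linear_combination p.2 * h)
  right_inv p := Prod.ext (by linear_combination p.1 * h) (by linear_combination p.2 * h)

theorem bezoutLinearEquiv_apply {u v b c : R} (h : u * b + v * c = 1) (w z : R) :
    bezoutLinearEquiv h (w, z) = (u * w + v * z, b * z - c * w) :=
  rfl

theorem bezoutLinearEquiv_symm_apply {u v b c : R} (h : u * b + v * c = 1) (w z : R) :
    (bezoutLinearEquiv h).symm (w, z) = (b * w - v * z, c * w + u * z) :=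
  rfl

namespace Ideal

theorem span_mul_sup_span_mul {b c : R} (g : R) (h : IsCoprime b c) :
    span {g * b} ⊔ span {g * c} = span {g} := by
  rw [← span_singleton_mul_span_singleton, ← span_singleton_mul_span_singleton, ← mul_sup,
    (isCoprime_span_singleton_iff b c).2 h |>.sup_eq, mul_top]

theorem span_mul_inf_span_mul {b c : R} (g : R) (h : IsCoprime b c) :
    span {g * b} ⊓ span {g * c} = span {g * b * c} := by
  refine le_antisymm ?_ (le_inf ?_ ?_)
  · rintro t ⟨hb, hc⟩
    obtain ⟨u, v, huv⟩ := h
    have htb : g * b * c ∣ t * b := by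
      rw [mul_right_comm]
      exact mul_dvd_mul_right (mem_span_singleton.1 hc) b
    have htc : g * b * c ∣ t * c := mul_dvd_mul_right (mem_span_singleton.1 hb) c
    rw [mem_span_singleton, show t = u * (t * b) + v * (t * c) by linear_combination -t * huv]
    exact dvd_add (htb.mul_left u) (htc.mul_left v)
  · exact span_singleton_le_span_singleton.2 (dvd_mul_right _ _)
  · exact span_singleton_le_span_singleton.2 ⟨b, mul_right_comm _ _ _⟩

theorem map_bezoutLinearEquiv_prod_span {u v b c : R} (g : R) (h : u * b + v * c = 1) :
    Submodule.map (bezoutLinearEquiv h : (R × R) →ₗ[R] R × R)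
      (Submodule.prod (span {g * b}) (span {g * c})) =
      Submodule.prod (span {g}) (span {g * b * c}) := by
  refine le_antisymm (Submodule.map_le_iff_le_comap.2 ?_) ?_
  · rintro ⟨w, z⟩ ⟨hw, hz⟩
    obtain ⟨s, rfl⟩ := mem_span_singleton.1 hw
    obtain ⟨t, rfl⟩ := mem_span_singleton.1 hz
    rw [Submodule.mem_comap, LinearEquiv.coe_coe, bezoutLinearEquiv_apply,
      Submodule.mem_prod, mem_span_singleton, mem_span_singleton]
    exact ⟨⟨u * b * s + v * c * t, by ring⟩, ⟨t - s, by ring⟩⟩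
  · rw [Submodule.map_equiv_eq_comap_symm]
    rintro ⟨w, z⟩ ⟨hw, hz⟩
    obtain ⟨s, rfl⟩ := mem_span_singleton.1 hw
    obtain ⟨t, rfl⟩ := mem_span_singleton.1 hz
    rw [Submodule.mem_comap, LinearEquiv.coe_coe, bezoutLinearEquiv_symm_apply,
      Submodule.mem_prod, mem_span_singleton, mem_span_singleton]
    exact ⟨⟨s - v * c * t, by ring⟩, ⟨s + u * b * t, by ring⟩⟩

noncomputable def quotientSpanMulProdEquiv {u v b c : R} (g : R) (h : u * b + v * c = 1) :
    ((R ⧸ span {g * b}) × (R ⧸ span {g * c})) ≃ₗ[R]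
      (R ⧸ span {g}) × (R ⧸ span {g * b * c}) :=
  (Submodule.quotientProdEquiv _ _).symm.trans <|
    (Submodule.Quotient.equiv _ _ _ (map_bezoutLinearEquiv_prod_span g h)).trans
      (Submodule.quotientProdEquiv _ _)

end Ideal

end CommRing

section PID

variable {R : Type*} [CommRing R] [IsDomain R]

theorem exists_eq_mul_eq_mul_isCoprime [IsBezout R] (x y : R) :
    ∃ g b c, x = g * b ∧ y = g * c ∧ IsCoprime b c := by
  classical
  let := IsBezout.toGCDDomain R
  obtain ⟨b, c, hb, hc, hbc⟩ := extract_gcd x y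
  exact ⟨gcd x y, b, c, hb, hc, (gcd_isUnit_iff b c).1 hbc⟩

variable [IsPrincipalIdealRing R]

theorem Ideal.nonempty_quotient_prod_equiv_sup_inf (I J : Ideal R) :
    Nonempty (((R ⧸ I) × (R ⧸ J)) ≃ₗ[R] (R ⧸ (I ⊔ J)) × (R ⧸ (I ⊓ J))) := by
  obtain ⟨x, rfl⟩ : ∃ x, I = span {x} := ⟨_, (span_singleton_generator I).symm⟩
  obtain ⟨y, rfl⟩ : ∃ y, J = span {y} := ⟨_, (span_singleton_generator J).symm⟩
  obtain ⟨g, b, c, rfl, rfl, hbc⟩ := exists_eq_mul_eq_mul_isCoprime x y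
  rw [span_mul_sup_span_mul g hbc, span_mul_inf_span_mul g hbc]
  obtain ⟨u, v, huv⟩ := hbc
  exact ⟨quotientSpanMulProdEquiv g huv⟩

/-- The bound on `K` is the invariant that lets the head `J ⊔ I 0` of the merged chain dominate
the tail, which is built recursively from `J ⊓ I 0`. -/
theorem exists_antitone_prod_pi_quotient_equiv (J : Ideal R) {m : ℕ} (I : Fin m → Ideal R)
    (hI : Antitone I) :
    ∃ K : Fin (m + 1) → Ideal R, Antitone K ∧ (∀ i, K i ≤ J ⊔ ⨆ j, I j) ∧
      Nonempty (((R ⧸ J) × Π i, R ⧸ I i) ≃ₗ[R] Π i, R ⧸ K i) := by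
  induction m generalizing J with
  | zero =>
    exact ⟨fun _ => J, antitone_const, fun _ => le_sup_left,
      ⟨LinearEquiv.prodUnique.trans (LinearEquiv.funUnique (Fin 1) R _).symm⟩⟩
  | succ m ih =>
    obtain ⟨K, hK, hKle, ⟨e⟩⟩ :=
      ih (J ⊓ I 0) (fun i => I i.succ) (hI.comp_monotone (Fin.strictMono_succ.monotone))
    have hK0 : ∀ i, K i ≤ I 0 := fun i =>
      (hKle i).trans (sup_le inf_le_right (iSup_le fun j => hI (Fin.zero_le _)))
    have hKJ : ∀ i, (Fin.cons (J ⊔ I 0) K : Fin (m + 2) → Ideal R) i ≤ J ⊔ ⨆ j, I j := by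
      refine Fin.cases ?_ fun i => ?_
      · exact sup_le_sup_left (le_iSup I 0) J
      · exact (hKle i).trans (sup_le_sup inf_le_left (iSup_le fun j => le_iSup I j.succ))
    obtain ⟨s⟩ := Ideal.nonempty_quotient_prod_equiv_sup_inf J (I 0)
    refine ⟨Fin.cons (J ⊔ I 0) K,
      Fin.antitone_cons.2 ⟨fun i => (hK0 i).trans le_sup_right, hK⟩, hKJ, ⟨?_⟩⟩
    exact ((LinearEquiv.refl R _).prodCongr (Fin.consLinearEquiv R fun i => R ⧸ I i).symm).trans <|
      (LinearEquiv.prodAssoc R _ _ _).symm.trans <| (s.prodCongr (.refl R _)).trans <|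
      (LinearEquiv.prodAssoc R _ _ _).trans <| ((LinearEquiv.refl R _).prodCongr e).trans <|
      Fin.consLinearEquiv R fun i => R ⧸ (Fin.cons (J ⊔ I 0) K : Fin (m + 2) → Ideal R) i

theorem exists_antitone_pi_quotient_equiv_fin :
    ∀ {m : ℕ} (I : Fin m → Ideal R),
      ∃ K : Fin m → Ideal R, Antitone K ∧ Nonempty ((Π i, R ⧸ I i) ≃ₗ[R] Π i, R ⧸ K i)
  | 0, I => ⟨I, fun i => i.elim0, ⟨.refl R _⟩⟩
  | _ + 1, I => by
    obtain ⟨K, hK, ⟨e⟩⟩ := exists_antitone_pi_quotient_equiv_fin fun i => I i.succ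
    obtain ⟨K', hK', -, ⟨e'⟩⟩ := exists_antitone_prod_pi_quotient_equiv (I 0) K hK
    exact ⟨K', hK',
      ⟨(Fin.consLinearEquiv R _).symm.trans <| ((LinearEquiv.refl R _).prodCongr e).trans e'⟩⟩

theorem exists_antitone_pi_quotient_equiv {ι : Type*} [Fintype ι] (I : ι → Ideal R) :
    ∃ (n : ℕ) (K : Fin n → Ideal R), Antitone K ∧
      Nonempty ((Π i, R ⧸ I i) ≃ₗ[R] Π i, R ⧸ K i) := by
  let e := Fintype.equivFin ι
  obtain ⟨K, hK, ⟨f⟩⟩ := exists_antitone_pi_quotient_equiv_fin (I ∘ e.symm)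
  exact ⟨_, K, hK, ⟨(LinearEquiv.piCongrLeft' R (fun i => R ⧸ I i) e).trans f⟩⟩

end PID

theorem Module.exists_pi_quotient_equiv (R : Type u) (M : Type v) [CommRing R] [IsDomain R]
    [IsPrincipalIdealRing R] [AddCommGroup M] [Module R M] [Module.Finite R M] :
    ∃ (ι : Type u) (_ : Fintype ι) (I : ι → Ideal R), Nonempty (M ≃ₗ[R] Π i, R ⧸ I i) := by
  obtain ⟨n, ι, _, p, -, e, ⟨f⟩⟩ := Module.equiv_free_prod_directSum R M
  refine ⟨Fin n ⊕ ι, inferInstance, Sum.elim (fun _ => ⊥) (fun i => R ∙ p i ^ e i),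
    ⟨f.trans <| (LinearEquiv.prodCongr ?_ ?_).trans
      (LinearEquiv.sumPiEquivProdPi R _ _ _).symm⟩⟩
  · exact (Finsupp.linearEquivFunOnFinite R R (Fin n)).trans
      (LinearEquiv.piCongrRight fun _ => (Submodule.quotEquivOfEqBot ⊥ rfl).symm)
  · exact DirectSum.linearEquivFunOnFintype R ι _

/-- **Structure theorem for finitely presented modules over a PID.**
A finitely presented module over a principal ideal domain is a finite direct sum
of cyclic modules `R ⧸ (aᵢ)` where each `aᵢ` divides the next one. -/
theorem structure_theorem_finitePresentation_pid
    {R : Type} [CommRing R] [IsDomain R] [IsPrincipalIdealRing R]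
    (M : Type) [AddCommGroup M] [Module R M] [Module.FinitePresentation R M] :
    ∃ (n : ℕ) (a : Fin n → R),
      (∀ (i : ℕ) (h : i + 1 < n), a ⟨i, by omega⟩ ∣ a ⟨i + 1, h⟩) ∧
      Nonempty (M ≃ₗ[R] ((i : Fin n) → R ⧸ Ideal.span {a i})) := by
  obtain ⟨ι, _, I, ⟨e⟩⟩ := Module.exists_pi_quotient_equiv R M
  obtain ⟨n, K, hK, ⟨f⟩⟩ := exists_antitone_pi_quotient_equiv I
  let a i := Submodule.IsPrincipal.generator (K i)
  have ha : ∀ i, Ideal.span {a i} = K i := fun i => Ideal.span_singleton_generator (K i)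
  refine ⟨n, a, fun i h => ?_, ⟨e.trans <| f.trans <|
    LinearEquiv.piCongrRight fun i => Submodule.quotEquivOfEq _ _ (ha i).symm⟩⟩
  rw [← Ideal.span_singleton_le_span_singleton, ha, ha]
  exact hK (Fin.mk_le_mk.2 i.le_succ)
end

section
/- Let R be a commutative ring, let m ≤ n be positive integers, let I₁ ⊇ I₂ ⊇ ⋯ ⊇ Iₘ and J₁ ⊇ J₂ ⊇ ⋯ ⊇ Jₙ be ideals of R, and suppose the R-module (R/I₁) ⊕ ⋯ ⊕ (R/Iₘ) is isomorphic to (R/J₁) ⊕ ⋯ ⊕ (R/Jₙ). Then J₁ = J₂ = ⋯ = J_{n−m} = R, and Iᵢ = J_{n−m+i} for each i = 1, …, m. -/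
/-- Pigeonhole: an injective map `Fin k → Fin m` hits some index `≤ m - k`. -/
lemma aux_pigeon {k m : ℕ} (hk : 0 < k) (g : Fin k → Fin m) (hg : Function.Injective g) :
    ∃ j, (g j : ℕ) ≤ m - k := by
  obtain ⟨j₀, -, hj₀⟩ := Finset.exists_min_image Finset.univ (fun j => (g j : ℕ))
    ⟨⟨0, hk⟩, Finset.mem_univ _⟩
  refine ⟨j₀, ?_⟩
  have hsub : Finset.image (fun j => (g j : ℕ)) Finset.univ ⊆ Finset.Ico (g j₀ : ℕ) m := by
    intro a ha
    simp only [Finset.mem_image, Finset.mem_univ, true_and] at ha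
    obtain ⟨j, rfl⟩ := ha
    exact Finset.mem_Ico.2 ⟨hj₀ j (Finset.mem_univ j), (g j).isLt⟩
  have hcard := Finset.card_le_card hsub
  have hinj : Function.Injective fun j : Fin k => (g j : ℕ) :=
    fun a b hab => hg (Fin.val_injective hab)
  rw [Finset.card_image_of_injective _ hinj] at hcard
  simp [Nat.card_Ico] at hcard
  omega

/-- Killing lemma: if `x` lands in some `I (g j)` for every injective `g`, then `x`
annihilates the image of every alternating `k`-form on `⨁ R⧸Iᵢ`. -/
lemma aux_killing {R : Type} [CommRing R] {m k : ℕ} (I : Fin m → Ideal R)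
    {N : Type} [AddCommGroup N] [Module R N]
    (f : ((i : Fin m) → R ⧸ I i) [⋀^Fin k]→ₗ[R] N)
    (v : Fin k → ((i : Fin m) → R ⧸ I i)) (x : R)
    (hx : ∀ g : Fin k → Fin m, Function.Injective g → ∃ j, x ∈ I (g j)) :
    x • f v = 0 := by
  classical
  set e : Fin m → ((i : Fin m) → R ⧸ I i) :=
    fun i => Pi.single i (Submodule.Quotient.mk 1) with he
  choose r hr using fun (j : Fin k) (i : Fin m) =>
    Submodule.Quotient.mk_surjective (I i) (v j i)
  have hv : v = fun j => ∑ i, r j i • e i := by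
    funext j
    rw [← Finset.univ_sum_single (v j)]
    refine Finset.sum_congr rfl fun i _ => ?_
    rw [he, ← Pi.single_smul]
    rw [← hr j i, ← Submodule.Quotient.mk_smul, smul_eq_mul, mul_one]
  have hexp : f v = ∑ g : Fin k → Fin m, (∏ j, r j (g j)) • f (fun j => e (g j)) := by
    rw [hv]
    have h1 : (f.toMultilinearMap fun j => ∑ i : Fin m, r j i • e i)
        = ∑ g : Fin k → Fin m, f.toMultilinearMap fun j => r j (g j) • e (g j) :=
      f.toMultilinearMap.map_sum (fun j i => r j i • e i)
    have h2 : ∀ g : Fin k → Fin m, (f.toMultilinearMap fun j => r j (g j) • e (g j))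
        = (∏ j, r j (g j)) • f.toMultilinearMap fun j => e (g j) :=
      fun g => f.toMultilinearMap.map_smul_univ _ _
    simp only [AlternatingMap.coe_multilinearMap] at h1 h2
    rw [h1]
    exact Finset.sum_congr rfl fun g _ => h2 g
  rw [hexp, Finset.smul_sum]
  refine Finset.sum_eq_zero fun g _ => ?_
  by_cases hg : Function.Injective g
  · obtain ⟨j, hj⟩ := hx g hg
    rw [smul_comm]
    have h0 : x • e (g j) = 0 := by
      rw [he, ← Pi.single_smul]
      have : x • (Submodule.Quotient.mk 1 : R ⧸ I (g j)) = 0 := by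
        rw [← Submodule.Quotient.mk_smul, smul_eq_mul, mul_one]
        exact (Submodule.Quotient.mk_eq_zero _).2 hj
      rw [this, Pi.single_zero]
    have hstep : f (Function.update (fun j' => e (g j')) j (x • e (g j))) =
        x • f (Function.update (fun j' => e (g j')) j (e (g j))) :=
      f.map_update_smul _ j x _
    rw [Function.update_eq_self] at hstep
    rw [← hstep, h0, AlternatingMap.map_update_zero, smul_zero]
  · obtain ⟨j₁, j₂, hj, hne⟩ := Function.not_injective_iff.1 hg
    rw [f.map_eq_zero_of_eq (fun j' => e (g j')) (congrArg e hj) hne, smul_zero, smul_zero]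

/-- Detection lemma: if `x` annihilates the image of every alternating `k`-form on
`⨁ R⧸Iᵢ` (for a descending chain), then `x ∈ I (m-k)`. -/
lemma aux_detect {R : Type} [CommRing R] {m k : ℕ} (hk1 : 1 ≤ k) (hkm : k ≤ m)
    (I : Fin m → Ideal R) (hI : ∀ i j : Fin m, i ≤ j → I j ≤ I i) (x : R)
    (hx : ∀ (N : Type) [AddCommGroup N] [Module R N]
      (f : ((i : Fin m) → R ⧸ I i) [⋀^Fin k]→ₗ[R] N)
      (v : Fin k → ((i : Fin m) → R ⧸ I i)), x • f v = 0) :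
    x ∈ I ⟨m - k, by omega⟩ := by
  classical
  set i₀ : Fin m := ⟨m - k, by omega⟩ with hi₀
  set idx : Fin k → Fin m := fun j => ⟨m - k + j, by have := j.isLt; omega⟩ with hidx
  have hle : ∀ j, I (idx j) ≤ Submodule.comap (LinearMap.id : R →ₗ[R] R) (I i₀) := by
    intro j
    rw [Submodule.comap_id]
    exact hI i₀ (idx j) (by simp [hi₀, hidx, Fin.mk_le_mk])
  set π : ((i : Fin m) → R ⧸ I i) →ₗ[R] (Fin k → R ⧸ I i₀) :=
    LinearMap.pi fun j =>
      (Submodule.mapQ (I (idx j)) (I i₀) LinearMap.id (hle j)) ∘ₗ (LinearMap.proj (idx j))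
    with hπ
  set dAlt : (Fin k → R ⧸ I i₀) [⋀^Fin k]→ₗ[R] (R ⧸ I i₀) :=
    { toMultilinearMap :=
        (Matrix.detRowAlternating (R := R ⧸ I i₀) (n := Fin k)).toMultilinearMap.restrictScalars R
      map_eq_zero_of_eq' := fun v i j h hij =>
        Matrix.detRowAlternating.map_eq_zero_of_eq v h hij } with hd
  set f : ((i : Fin m) → R ⧸ I i) [⋀^Fin k]→ₗ[R] (R ⧸ I i₀) := dAlt.compLinearMap π with hf
  set v : Fin k → ((i : Fin m) → R ⧸ I i) :=
    fun j => Pi.single (idx j) (Submodule.Quotient.mk 1) with hv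
  have hidxinj : ∀ j j' : Fin k, idx j' = idx j ↔ j' = j := by
    intro j j'
    constructor
    · intro h
      have hval := congrArg Fin.val h
      simp only [hidx] at hval
      exact Fin.ext (by omega)
    · rintro rfl; rfl
  have hmat : (fun j => π (v j)) = (1 : Matrix (Fin k) (Fin k) (R ⧸ I i₀)) := by
    funext j j'
    simp only [hπ, LinearMap.pi_apply, LinearMap.comp_apply, LinearMap.proj_apply, hv]
    by_cases h : j' = j
    · subst h
      rw [Pi.single_eq_same, Matrix.one_apply_eq, Submodule.mapQ_apply]
      rfl
    · rw [Pi.single_eq_of_ne (fun hc => h ((hidxinj j j').1 hc)), map_zero,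
        Matrix.one_apply_ne (Ne.symm h)]
  have hfv : f v = 1 := by
    rw [hf, AlternatingMap.compLinearMap_apply]
    show Matrix.detRowAlternating (fun j => π (v j)) = 1
    rw [hmat]
    exact Matrix.det_one
  have := hx (R ⧸ I i₀) f v
  rw [hfv] at this
  have h1 : x • (1 : R ⧸ I i₀) = Submodule.Quotient.mk x := by
    rw [show (1 : R ⧸ I i₀) = Submodule.Quotient.mk 1 from rfl, ← Submodule.Quotient.mk_smul,
      smul_eq_mul, mul_one]
  rw [h1] at this
  exact (Submodule.Quotient.mk_eq_zero _).1 this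

/-- Transfer of alternating forms along a linear equivalence. -/
lemma aux_transfer {R M N P : Type} [CommRing R] [AddCommGroup M] [Module R M]
    [AddCommGroup N] [Module R N] [AddCommGroup P] [Module R P] {k : ℕ}
    (e : M ≃ₗ[R] N) (f : N [⋀^Fin k]→ₗ[R] P) (v : Fin k → N) :
    f v = (f.compLinearMap e.toLinearMap) (fun j => e.symm (v j)) := by
  simp

/-- **Uniqueness of the invariant-factor decomposition over an arbitrary commutative
ring.** If `⨁ᵢ R⧸Iᵢ ≅ ⨁ⱼ R⧸Jⱼ` for descending chains of ideals `I₁ ⊇ ⋯ ⊇ Iₘ` and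
`J₁ ⊇ ⋯ ⊇ Jₙ` with `m ≤ n`, then `J₁ = ⋯ = J_{n-m} = R` and `Iᵢ = J_{n-m+i}`. -/
theorem uniqueness_invariant_factors
    {R : Type} [CommRing R] {m n : ℕ} (hm : 0 < m) (hmn : m ≤ n)
    (I : Fin m → Ideal R) (J : Fin n → Ideal R)
    (hI : ∀ i j : Fin m, i ≤ j → I j ≤ I i)
    (hJ : ∀ i j : Fin n, i ≤ j → J j ≤ J i)
    (h : Nonempty (((i : Fin m) → R ⧸ I i) ≃ₗ[R] ((j : Fin n) → R ⧸ J j))) :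
    (∀ j : Fin n, (j : ℕ) < n - m → J j = ⊤) ∧
    (∀ i : Fin m, I i = J ⟨n - m + (i : ℕ), by have := i.isLt; omega⟩) := by
  obtain ⟨e⟩ := h
  constructor
  · intro j hj
    have hjn : (j : ℕ) < n := j.isLt
    set k : ℕ := n - (j : ℕ) with hk
    have hkm : m < k := by omega
    rw [Submodule.eq_top_iff']
    intro x
    have hmem : x ∈ J ⟨n - k, by omega⟩ := by
      refine aux_detect (by omega) (by omega) J hJ x ?_
      intro N _ _ f v
      rw [aux_transfer e f v]
      refine aux_killing I _ _ x fun g hg => ?_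
      exact absurd (Fintype.card_le_of_injective g hg) (by simp; omega)
    have : (⟨n - k, by omega⟩ : Fin n) = j := Fin.ext (by simp [hk]; omega)
    rwa [this] at hmem
  · intro i
    have him : (i : ℕ) < m := i.isLt
    set k : ℕ := m - (i : ℕ) with hk
    refine le_antisymm ?_ ?_
    · intro x hxI
      have hmem : x ∈ J ⟨n - k, by omega⟩ := by
        refine aux_detect (by omega) (by omega) J hJ x ?_
        intro N _ _ f v
        rw [aux_transfer e f v]
        refine aux_killing I _ _ x fun g hg => ?_
        obtain ⟨j, hjle⟩ := aux_pigeon (by omega) g hg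
        exact ⟨j, hI (g j) i (by rw [Fin.le_def]; omega) hxI⟩
      have : (⟨n - k, by omega⟩ : Fin n) = ⟨n - m + (i : ℕ), by omega⟩ :=
        Fin.ext (by simp [hk]; omega)
      rwa [this] at hmem
    · intro x hxJ
      have hmem : x ∈ I ⟨m - k, by omega⟩ := by
        refine aux_detect (by omega) (by omega) I hI x ?_
        intro N _ _ f v
        rw [aux_transfer e.symm f v]
        refine aux_killing J _ _ x fun g hg => ?_
        obtain ⟨j, hjle⟩ := aux_pigeon (by omega) g hg
        refine ⟨j, hJ (g j) ⟨n - m + (i : ℕ), by omega⟩ (by rw [Fin.le_def]; simp; omega) hxJ⟩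
      have : (⟨m - k, by omega⟩ : Fin m) = i := Fin.ext (by simp [hk]; omega)
      rwa [this] at hmem
end

section
/- Let R be an integral domain that is bounded, i.e. for every nonzero a ∈ R there is a natural number n such that in any factorization a = a₀ a₁ ⋯ aₙ into n+1 factors, at least one factor aᵢ is a unit. Then the polynomial ring R[X] is bounded in the same sense. -/
/-!
If the leading coefficient of `p` is bounded by `m`, then `p` is bounded by `m + deg p`: in a
factorization of `p` without unit factors at most `deg p` factors are nonconstant, and the
constant ones are nonunits of `R` whose product divides the leading coefficient of `p`, so
there are at most `m` of them.
-/

open Finset Polynomial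

def BoundedBy {M : Type*} [CommMonoid M] (a : M) (n : ℕ) : Prop :=
  ∀ f : Fin (n + 1) → M, a = ∏ i, f i → ∃ i, IsUnit (f i)

namespace BoundedBy

variable {M : Type*} [CommMonoid M] {a b : M} {n : ℕ}

theorem of_dvd (ha : BoundedBy a n) (hba : b ∣ a) : BoundedBy b n := by
  obtain ⟨c, rfl⟩ := hba
  intro f hf
  obtain ⟨i, hi⟩ := ha (Fin.cons (f 0 * c) (Fin.tail f)) (by
    rw [Fin.prod_cons, hf, Fin.prod_univ_succ, mul_right_comm]; rfl)
  cases i using Fin.cases with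
  | zero => exact ⟨0, isUnit_of_mul_isUnit_left hi⟩
  | succ j => exact ⟨j.succ, hi⟩

theorem card_le_of_prod_dvd {ι : Type*} {s : Finset ι} {g : ι → M} (ha : BoundedBy a n)
    (hg : ∀ i ∈ s, ¬IsUnit (g i)) (hdvd : ∏ i ∈ s, g i ∣ a) : #s ≤ n := by
  by_contra! hlt
  obtain ⟨t, hts, ht⟩ := exists_subset_card_eq hlt
  let e : Fin (n + 1) ≃ t := (Fintype.equivFinOfCardEq (by simp [ht])).symm
  have hbound : BoundedBy (∏ i ∈ t, g i) n :=
    ha.of_dvd ((prod_dvd_prod_of_subset t s g hts).trans hdvd)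
  obtain ⟨j, hj⟩ := hbound (fun j => g (e j)) (by
    rw [Equiv.prod_comp e (fun i => g i), prod_coe_sort])
  exact hg _ (hts (e j).2) hj

end BoundedBy

namespace Polynomial

theorem card_filter_natDegree_ne_zero_le {R ι : Type*} [CommSemiring R] [NoZeroDivisors R]
    (s : Finset ι) (f : ι → R[X]) (hf : ∀ i ∈ s, f i ≠ 0) :
    #{i ∈ s | (f i).natDegree ≠ 0} ≤ (∏ i ∈ s, f i).natDegree := by
  rw [natDegree_prod s f hf]
  calc #{i ∈ s | (f i).natDegree ≠ 0}
      ≤ ∑ i ∈ s with (f i).natDegree ≠ 0, (f i).natDegree := by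
        simpa using card_nsmul_le_sum _ _ 1 fun i hi => Nat.one_le_iff_ne_zero.2 (mem_filter.1 hi).2
    _ ≤ ∑ i ∈ s, (f i).natDegree := sum_le_sum_of_subset (filter_subset _ _)

theorem isUnit_of_natDegree_eq_zero {R : Type*} [Semiring R] {p : R[X]}
    (hp : p.natDegree = 0) (hu : IsUnit p.leadingCoeff) : IsUnit p := by
  rw [eq_C_of_natDegree_eq_zero hp, isUnit_C]
  rwa [leadingCoeff, hp] at hu

theorem boundedBy_add_natDegree {R : Type*} [CommSemiring R] [NoZeroDivisors R] {p : R[X]}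
    {m : ℕ} (hp : p ≠ 0) (hm : BoundedBy p.leadingCoeff m) : BoundedBy p (m + p.natDegree) := by
  intro f hf
  by_contra! hf_nonunit
  have hf_ne : ∀ i ∈ univ, f i ≠ 0 := fun i _ hi =>
    hp (by rw [hf]; exact prod_eq_zero (mem_univ i) hi)
  have hconst : #{i | (f i).natDegree = 0} ≤ m := by
    refine hm.card_le_of_prod_dvd (g := fun i => (f i).leadingCoeff) (fun i hi => ?_) ?_
    · exact fun hu => hf_nonunit i (isUnit_of_natDegree_eq_zero (mem_filter.1 hi).2 hu)
    · calc _ ∣ ∏ i, (f i).leadingCoeff := prod_dvd_prod_of_subset _ _ _ (filter_subset _ _)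
        _ = p.leadingCoeff := by rw [← leadingCoeff_prod, ← hf]
  have hnonconst : #{i | (f i).natDegree ≠ 0} ≤ p.natDegree :=
    (card_filter_natDegree_ne_zero_le univ f hf_ne).trans_eq (by rw [← hf])
  have hsplit := card_filter_add_card_filter_not (s := univ) (fun i => (f i).natDegree = 0)
  simp only [card_univ, Fintype.card_fin, ← ne_eq] at hsplit
  omega

end Polynomial

/-- If `R` is a bounded integral domain (every nonzero element `a` admits an `n` such
that in any factorization of `a` into `n + 1` factors some factor is a unit), then the
polynomial ring `R[X]` is bounded in the same sense. -/
theorem polynomial_bounded_of_bounded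
    {R : Type} [CommRing R] [IsDomain R]
    (hR : ∀ a : R, a ≠ 0 → ∃ n : ℕ, ∀ f : Fin (n + 1) → R,
      a = ∏ i, f i → ∃ i, IsUnit (f i)) :
    ∀ p : Polynomial R, p ≠ 0 → ∃ n : ℕ, ∀ f : Fin (n + 1) → Polynomial R,
      p = ∏ i, f i → ∃ i, IsUnit (f i) := by
  intro p hp
  obtain ⟨m, hm⟩ : ∃ m, BoundedBy p.leadingCoeff m := hR _ (leadingCoeff_ne_zero.2 hp)
  exact ⟨m + p.natDegree, boundedBy_add_natDegree hp hm⟩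
end

section
/- Let R be a GCD domain satisfying the ascending chain condition on principal ideals, and let x₁, …, x_k be nonzero elements of R. Then there exists a finite set P of nonzero elements of R, pairwise relatively prime (the gcd of any two distinct members of P is a unit), such that each xᵢ is an associate of a product of elements of P. -/
/-!
ACCP makes `R` atomic, and in a GCD domain irreducibles are prime, so `R` is a UFD. The
normalized prime factors of the `xᵢ` then form `P`: distinct normalized primes are not
associated, hence relatively prime.
-/

open UniqueFactorizationMonoid

theorem WfDvdMonoid.of_forall_span_singleton_chain_stabilizes
    {R : Type*} [CommRing R] [IsDomain R]
    (hacc : ∀ b : ℕ → R, (∀ i, Ideal.span {b i} ≤ Ideal.span {b (i + 1)}) →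
      ∃ n, Ideal.span {b n} = Ideal.span {b (n + 1)}) :
    WfDvdMonoid R := by
  refine ⟨wellFounded_iff_isEmpty_descending_chain.mpr ⟨fun ⟨b, hb⟩ => ?_⟩⟩
  have hlt : ∀ i, Ideal.span {b i} < Ideal.span {b (i + 1)} :=
    fun i => Ideal.span_singleton_lt_span_singleton.mpr (hb i)
  obtain ⟨n, hn⟩ := hacc b fun i => (hlt i).le
  exact (hlt n).ne hn

theorem UniqueFactorizationMonoid.isRelPrime_of_mem_normalizedFactors {α : Type*}
    [CommMonoidWithZero α] [NormalizationMonoid α] [UniqueFactorizationMonoid α]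
    {a b p q : α} (hp : p ∈ normalizedFactors a) (hq : q ∈ normalizedFactors b)
    (hpq : p ≠ q) :
    IsRelPrime p q := by
  have hp_irr := irreducible_of_normalized_factor p hp
  have hq_irr := irreducible_of_normalized_factor q hq
  refine hp_irr.isRelPrime_iff_not_dvd.mpr fun hdvd => hpq ?_
  exact (hp_irr.associated_of_dvd hq_irr hdvd).eq_of_normalized
    (normalize_normalized_factor p hp) (normalize_normalized_factor q hq)

theorem UniqueFactorizationMonoid.exists_finset_pairwise_isRelPrime_associated_prod
    {α : Type*} [CommMonoidWithZero α] [UniqueFactorizationMonoid α]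
    {ι : Type*} [Fintype ι] (x : ι → α) (hx : ∀ i, x i ≠ 0) :
    ∃ P : Finset α,
      (∀ p ∈ P, p ≠ 0) ∧
      (∀ p ∈ P, ∀ q ∈ P, p ≠ q → IsRelPrime p q) ∧
      (∀ i, ∃ s : Multiset α, (∀ p ∈ s, p ∈ P) ∧ Associated (x i) s.prod) := by
  classical
  let : NormalizationMonoid α :=
    UniqueFactorizationMonoid.strongNormalizationMonoid.toNormalizationMonoid
  have mem_P {p : α} : p ∈ Finset.univ.biUnion (fun i => (normalizedFactors (x i)).toFinset) ↔
      ∃ i, p ∈ normalizedFactors (x i) := by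
    simp only [Finset.mem_biUnion, Finset.mem_univ, true_and, Multiset.mem_toFinset]
  refine ⟨Finset.univ.biUnion fun i => (normalizedFactors (x i)).toFinset, ?_, ?_, ?_⟩
  · intro p hp
    obtain ⟨i, hpi⟩ := mem_P.mp hp
    exact (prime_of_normalized_factor p hpi).ne_zero
  · intro p hp q hq hpq
    obtain ⟨i, hpi⟩ := mem_P.mp hp
    obtain ⟨j, hqj⟩ := mem_P.mp hq
    exact isRelPrime_of_mem_normalizedFactors hpi hqj hpq
  · exact fun i => ⟨normalizedFactors (x i), fun p hp => mem_P.mpr ⟨i, hp⟩,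
      (prod_normalizedFactors (hx i)).symm⟩

/-- **Quasi-factorization.** Given nonzero elements `x₁, …, x_k` of a GCD domain
satisfying the ascending chain condition on principal ideals, there is a finite set `P`
of nonzero, pairwise relatively prime elements such that each `xᵢ` is an associate of a
product of elements of `P`. -/
theorem quasi_factorization
    {R : Type} [CommRing R] [IsDomain R] [GCDMonoid R]
    (hacc : ∀ b : ℕ → R, (∀ i, Ideal.span {b i} ≤ Ideal.span {b (i + 1)}) →
      ∃ n, Ideal.span {b n} = Ideal.span {b (n + 1)})
    {k : ℕ} (x : Fin k → R) (hx : ∀ i, x i ≠ 0) :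
    ∃ P : Finset R,
      (∀ p ∈ P, p ≠ 0) ∧
      (∀ p ∈ P, ∀ q ∈ P, p ≠ q → IsRelPrime p q) ∧
      (∀ i : Fin k, ∃ s : Multiset R, (∀ p ∈ s, p ∈ P) ∧ Associated (x i) s.prod) := by
  have := WfDvdMonoid.of_forall_span_singleton_chain_stabilizes hacc
  have : UniqueFactorizationMonoid R := ufm_of_decomposition_of_wfDvdMonoid
  exact exists_finset_pairwise_isRelPrime_associated_prod x hx
end

section
/- Let k be a field and let S be a finite set of monic polynomials in k[X]. Then there exists a finite set T of monic polynomials in k[X] such that: (i) each element of T is of the form f(X^q) where f is a separable polynomial and q = 1 or q is a power of a prime p equal to the characteristic of k; (ii) any two distinct elements of T are coprime, i.e. together they generate the unit ideal of k[X]; (iii) every polynomial in S is a product of elements of T. -/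
open Polynomial

/-- Given a finite set `S` of monic polynomials over a field `k`, there is a finite set
`T` of monic polynomials such that (i) each element of `T` has the form `f(X^q)` with
`f` separable and `q = 1` or `q` a power of a prime equal to the characteristic of `k`;
(ii) distinct elements of `T` are strongly relatively prime; (iii) every polynomial in
`S` is a product of polynomials in `T`. -/
theorem separable_decomposition_of_monic_family
    {k : Type} [Field k] (S : Finset (Polynomial k)) (hS : ∀ s ∈ S, s.Monic) :
    ∃ T : Finset (Polynomial k),
      (∀ t ∈ T, t.Monic) ∧
      (∀ t ∈ T, ∃ (f : Polynomial k) (q : ℕ),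
        f.Separable ∧
        (q = 1 ∨ ∃ p : ℕ, p.Prime ∧ (p : k) = 0 ∧ ∃ j : ℕ, q = p ^ j) ∧
        t = f.comp (X ^ q)) ∧
      (∀ t₁ ∈ T, ∀ t₂ ∈ T, t₁ ≠ t₂ → IsCoprime t₁ t₂) ∧
      (∀ s ∈ S, ∃ c : Multiset (Polynomial k), (∀ t ∈ c, t ∈ T) ∧ s = c.prod) := by
  classical
  obtain ⟨q, hq⟩ := ExpChar.exists k
  refine ⟨S.biUnion fun s => (UniqueFactorizationMonoid.normalizedFactors s).toFinset,
    ?_, ?_, ?_, ?_⟩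
  · intro t ht
    obtain ⟨s, _, ht⟩ := Finset.mem_biUnion.mp ht
    rw [Multiset.mem_toFinset] at ht
    have hirr := UniqueFactorizationMonoid.irreducible_of_normalized_factor t ht
    have := UniqueFactorizationMonoid.normalize_normalized_factor t ht
    rw [← this]
    exact Polynomial.monic_normalize hirr.ne_zero
  · intro t ht
    obtain ⟨s, _, ht⟩ := Finset.mem_biUnion.mp ht
    rw [Multiset.mem_toFinset] at ht
    have hirr := UniqueFactorizationMonoid.irreducible_of_normalized_factor t ht
    obtain ⟨g, hgsep, m, hgm⟩ := hirr.hasSeparableContraction q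
    refine ⟨g, q ^ m, hgsep, ?_, by rw [← hgm, Polynomial.expand_eq_comp_X_pow]⟩
    cases hq with
    | zero => left; simp
    | prime hp => exact Or.inr ⟨q, ‹q.Prime›, by exact_mod_cast CharP.cast_eq_zero k q, m, rfl⟩
  · intro t₁ ht₁ t₂ ht₂ hne
    obtain ⟨s₁, _, ht₁⟩ := Finset.mem_biUnion.mp ht₁
    obtain ⟨s₂, _, ht₂⟩ := Finset.mem_biUnion.mp ht₂
    rw [Multiset.mem_toFinset] at ht₁ ht₂
    have h₁ := UniqueFactorizationMonoid.irreducible_of_normalized_factor _ ht₁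
    have h₂ := UniqueFactorizationMonoid.irreducible_of_normalized_factor _ ht₂
    have m₁ : t₁.Monic := by
      rw [← UniqueFactorizationMonoid.normalize_normalized_factor _ ht₁]
      exact Polynomial.monic_normalize h₁.ne_zero
    have m₂ : t₂.Monic := by
      rw [← UniqueFactorizationMonoid.normalize_normalized_factor _ ht₂]
      exact Polynomial.monic_normalize h₂.ne_zero
    rw [h₁.coprime_iff_not_dvd]
    intro hdvd
    exact hne (Polynomial.eq_of_monic_of_associated m₁ m₂ (h₁.associated_of_dvd h₂ hdvd))
  · intro s hs
    have hsne : s ≠ 0 := (hS s hs).ne_zero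
    refine ⟨UniqueFactorizationMonoid.normalizedFactors s, fun t ht =>
      Finset.mem_biUnion.mpr ⟨s, hs, Multiset.mem_toFinset.mpr ht⟩, ?_⟩
    have hassoc := UniqueFactorizationMonoid.prod_normalizedFactors hsne
    have hmon : (UniqueFactorizationMonoid.normalizedFactors s).prod.Monic := by
      apply Polynomial.monic_multiset_prod_of_monic
      intro t ht
      exact Polynomial.monic_normalize
        (UniqueFactorizationMonoid.irreducible_of_factor _ ht).ne_zero
    exact (Polynomial.eq_of_monic_of_associated hmon (hS s hs) hassoc).symm
end

section
/- (Artin–Rees) Let R be a commutative Noetherian ring, I an ideal of R, M a finitely generated R-module, and N a submodule of M. Then there exists a natural number k such that for all n ≥ k, I^{n−k} • (I^k • M ⊓ N) = I^n • M ⊓ N. -/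
/-- **Artin–Rees lemma.** Let `I` be an ideal of a commutative Noetherian ring `R`,
`M` a finitely generated `R`-module and `N` a submodule of `M`. Then there is `k`
such that for all `n ≥ k` we have `I^(n-k) • (I^k • M ⊓ N) = I^n • M ⊓ N`. -/
theorem artin_rees
    {R : Type} [CommRing R] [IsNoetherianRing R] (I : Ideal R)
    {M : Type} [AddCommGroup M] [Module R M] [Module.Finite R M]
    (N : Submodule R M) :
    ∃ k : ℕ, ∀ n : ℕ, k ≤ n →
      I ^ (n - k) • (I ^ k • (⊤ : Submodule R M) ⊓ N) =
        I ^ n • (⊤ : Submodule R M) ⊓ N := by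
  obtain ⟨k, hk⟩ := Ideal.exists_pow_inf_eq_pow_smul I N
  exact ⟨k, fun n hn => (hk n hn).symm⟩
end

section
/- (Krull intersection theorem) Let R be a commutative Noetherian ring, I an ideal of R, and M a finitely generated R-module. Let A = ⋂ₙ Iⁿ • M be the intersection of the submodules Iⁿ • M over all natural numbers n. Then for each a ∈ A there exists x ∈ I with a = x • a; in particular I • A = A. -/
/-- **Krull intersection theorem.** Let `I` be an ideal of a commutative Noetherian
ring `R` and `M` a finitely generated `R`-module. If `A = ⋂ₙ Iⁿ • M`, then each
`a ∈ A` satisfies `a = x • a` for some `x ∈ I`; in particular `I • A = A`. -/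
theorem krull_intersection
    {R : Type} [CommRing R] [IsNoetherianRing R] (I : Ideal R)
    {M : Type} [AddCommGroup M] [Module R M] [Module.Finite R M]
    (A : Submodule R M) (hA : A = ⨅ n : ℕ, I ^ n • (⊤ : Submodule R M)) :
    (∀ a ∈ A, ∃ x ∈ I, a = x • a) ∧ I • A = A := by
  subst hA
  have key : ∀ a ∈ (⨅ n : ℕ, I ^ n • (⊤ : Submodule R M)), ∃ x ∈ I, a = x • a := by
    intro a ha
    obtain ⟨r, hr⟩ := (Ideal.mem_iInf_smul_pow_eq_bot_iff I a).mp ha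
    exact ⟨r, r.prop, hr.symm⟩
  refine ⟨key, le_antisymm (Submodule.smul_le.mpr fun r hr m hm =>
    Submodule.smul_mem _ r hm) fun a ha => ?_⟩
  obtain ⟨x, hx, hax⟩ := key a ha
  rw [hax]
  exact Submodule.smul_mem_smul hx ha
end

section
/- Let k be a field and let A be a nontrivial finite-dimensional associative unital k-algebra. Then A has a nilpotent two-sided ideal I such that the quotient algebra A/I is isomorphic as a k-algebra to a finite product of simple k-algebras. -/
/-!
A finite-dimensional algebra is Artinian, hence semiprimary: its Jacobson radical `J` is
nilpotent and `A ⧸ J` is semisimple. By Wedderburn–Artin, `A ⧸ J` is a finite product of matrix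
algebras over division algebras, and these are simple.
-/

theorem Submodule.list_prod_mem_pow {R A : Type*} [Semiring R] [Semiring A] [Module R A]
    [IsScalarTower R A A] {M : Submodule R A} {l : List A} (hl : ∀ x ∈ l, x ∈ M) :
    l.prod ∈ M ^ l.length := by
  induction l using List.reverseRecOn with
  | nil => exact Submodule.one_le.mp le_rfl
  | append_singleton l a ih =>
    rw [List.prod_append, List.prod_singleton, List.length_append, List.length_singleton,
      Submodule.pow_succ]
    exact mul_mem_mul (ih fun x hx => hl x (List.mem_append_left _ hx))
      (hl a (List.mem_append_right _ (List.mem_singleton_self a)))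

theorem exists_nilpotent_ideal_quotient_product_of_simple_general
    {k : Type} [Field k] {A : Type} [Ring A] [Algebra k A] [FiniteDimensional k A] :
    ∃ I : TwoSidedIdeal A,
      (∃ n : ℕ, ∀ l : List A, l.length = n → (∀ x ∈ l, x ∈ I) → l.prod = 0) ∧
      ∃ (m : ℕ) (B : Fin m → Type) (_ : ∀ i, Ring (B i)) (_ : ∀ i, Algebra k (B i)),
        (∀ i, IsSimpleRing (B i)) ∧
        ∃ f : A →ₐ[k] ((i : Fin m) → B i),
          Function.Surjective f ∧ ∀ x : A, f x = 0 ↔ x ∈ I := by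
  have : IsArtinianRing A := .of_finite k A
  obtain ⟨n, hJn⟩ := IsSemiprimaryRing.isNilpotent (R := A)
  obtain ⟨m, D, d, _, _, _, ⟨e⟩⟩ :=
    IsSemisimpleRing.exists_algEquiv_pi_matrix_divisionRing k (A ⧸ Ring.jacobson A)
  refine ⟨(Ring.jacobson A).toTwoSided, ⟨n, fun l hl hmem => ?_⟩, m, _, inferInstance,
    inferInstance, fun _ => inferInstance, e.toAlgHom.comp (Ideal.Quotient.mkₐ k _),
    e.surjective.comp (Ideal.Quotient.mkₐ_surjective k _), fun x => ?_⟩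
  · have := Submodule.list_prod_mem_pow fun x hx => Ideal.mem_toTwoSided.mp (hmem x hx)
    rwa [hl, hJn, Submodule.zero_eq_bot, Submodule.mem_bot] at this
  · simp [Ideal.mem_toTwoSided, Ideal.Quotient.eq_zero_iff_mem]

/-- Every nontrivial finite-dimensional algebra `A` over a field `k` has a nilpotent
two-sided ideal `I` such that `A / I` is isomorphic to a finite product of simple
`k`-algebras (the quotient being realized by a surjective algebra map with kernel `I`). -/
theorem exists_nilpotent_ideal_quotient_product_of_simple
    {k : Type} [Field k] {A : Type} [Ring A] [Algebra k A] [FiniteDimensional k A]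
    [Nontrivial A] :
    ∃ I : TwoSidedIdeal A,
      (∃ n : ℕ, ∀ l : List A, l.length = n → (∀ x ∈ l, x ∈ I) → l.prod = 0) ∧
      ∃ (m : ℕ) (B : Fin m → Type) (_ : ∀ i, Ring (B i)) (_ : ∀ i, Algebra k (B i)),
        (∀ i, IsSimpleRing (B i)) ∧
        ∃ f : A →ₐ[k] ((i : Fin m) → B i),
          Function.Surjective f ∧ ∀ x : A, f x = 0 ↔ x ∈ I :=
  exists_nilpotent_ideal_quotient_product_of_simple_general
end

section
/- Let k be a subfield of the real numbers ℝ that is algebraically closed in ℝ (every real number that is algebraic over k already lies in k), and let A be a nontrivial finite-dimensional associative unital k-algebra. Then either A has a zero-divisor (there exist nonzero x, y ∈ A with x·y = 0), or A is isomorphic as a k-algebra to one of: k itself; the quadratic extension k[X]/(X² + 1); or the quaternion algebra over k (the four-dimensional k-algebra with basis 1, i, j, ij satisfying i² = j² = −1 and i·j = −j·i). -/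
/-!
If `A` has no zero divisors, every `x ∈ A` generates a finite field extension of `k`, of degree
at most `2` because `k` is algebraically closed in `ℝ`: a complex root `z` of the minimal
polynomial is also a root of `(X - z) (X - z̄)`, which has coefficients in `k`. Completing the
square, using that nonnegative elements of `k` are squares, gives `A = k ⊕ V` with `V` the set of
elements whose square is a nonpositive scalar. `V` is closed under addition, so `x * y + y * x`
is a scalar for `x, y ∈ V`. If `V ≠ 0`, rescale some `i ∈ V` to `i² = -1`; if moreover
`V ≠ k ∙ i`, Gram–Schmidt produces `j ∈ V` with `j² = -1` and `i * j = -(j * i)`, and then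
`V` is spanned by `i, j, i * j`: an element of `V` orthogonal to all three anticommutes with `i` and
`j`, hence commutes with `i * j`, and so vanishes.
-/

open Polynomial

namespace Frobenius

lemma irreducible_X_sq_add_one (k : Type*) [Field k] [LinearOrder k] [IsStrictOrderedRing k] :
    Irreducible (X ^ 2 + 1 : k[X]) := by
  have hdeg : (X ^ 2 + 1 : k[X]).natDegree = 2 := by compute_degree!
  refine irreducible_of_degree_le_three_of_not_isRoot (by simp [hdeg]) fun x => ?_
  simp only [IsRoot, eval_add, eval_pow, eval_X, eval_one]
  positivity

lemma exists_mul_self_eq_of_natDegree_minpoly_le_two {K B : Type*} [Field K] [Ring B]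
    [Algebra K B] [Nontrivial B] {x : B} (hx : IsIntegral K x)
    (h : (minpoly K x).natDegree ≤ 2) : ∃ b c : K, x * x = b • x + algebraMap K B c := by
  have hm := minpoly.monic hx
  have hx0 := minpoly.aeval K x
  rw [aeval_eq_sum_range' (n := 3) (by omega)] at hx0
  simp only [Finset.sum_range_succ, Finset.sum_range_zero, zero_add, pow_zero, pow_one, sq]
    at hx0
  simp only [Algebra.algebraMap_eq_smul_one]
  rcases (by have := minpoly.natDegree_pos hx; omega :
    (minpoly K x).natDegree = 1 ∨ (minpoly K x).natDegree = 2) with h1 | h2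
  · have hc1 : (minpoly K x).coeff 1 = 1 := h1 ▸ hm.coeff_natDegree
    rw [hc1, coeff_eq_zero_of_natDegree_lt (by omega : (minpoly K x).natDegree < 2), zero_smul,
      add_zero, one_smul] at hx0
    refine ⟨-(minpoly K x).coeff 0, 0, ?_⟩
    nth_rw 2 [eq_neg_of_add_eq_zero_right hx0]
    rw [mul_neg, mul_smul_comm, mul_one]
    module
  · have hc2 : (minpoly K x).coeff 2 = 1 := h2 ▸ hm.coeff_natDegree
    rw [hc2] at hx0
    exact ⟨-(minpoly K x).coeff 1, -(minpoly K x).coeff 0,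
      by linear_combination (norm := module) hx0⟩

section Imaginary

variable (k : Type*) {A : Type*} [Field k] [LinearOrder k] [Ring A] [Algebra k A]

def IsImaginary (x : A) : Prop := ∃ c : k, c ≤ 0 ∧ x * x = algebraMap k A c

variable {k}

lemma isImaginary_zero : IsImaginary k (0 : A) := ⟨0, le_rfl, by simp⟩

lemma isImaginary_or_exists_eq_algebraMap [IsDomain A] (hsq : ∀ c : k, 0 ≤ c → IsSquare c)
    {w : A} {c : k} (h : w * w = algebraMap k A c) :
    IsImaginary k w ∨ ∃ r : k, w = algebraMap k A r := by
  rcases le_or_gt c 0 with hc | hc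
  · exact Or.inl ⟨c, hc, h⟩
  obtain ⟨s, rfl⟩ := hsq c hc.le
  have hfac : (w + algebraMap k A s) * (w - algebraMap k A s) = 0 := by
    rw [← (Algebra.commute_algebraMap_right s w).mul_self_sub_mul_self_eq, h, map_mul, sub_self]
  rcases mul_eq_zero.mp hfac with h | h
  · exact Or.inr ⟨-s, by rw [map_neg]; exact eq_neg_of_add_eq_zero_left h⟩
  · exact Or.inr ⟨s, sub_eq_zero.mp h⟩

variable [IsStrictOrderedRing k]

lemma IsImaginary.smul {x : A} (hx : IsImaginary k x) (t : k) : IsImaginary k (t • x) := by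
  obtain ⟨c, hc, hxx⟩ := hx
  exact ⟨t * t * c, mul_nonpos_of_nonneg_of_nonpos (mul_self_nonneg t) hc, by
    rw [smul_mul_smul_comm, hxx, Algebra.smul_def, ← map_mul]⟩

lemma isImaginary_of_mul_self_eq_neg_one {x : A} (hx : x * x = -1) : IsImaginary k x :=
  ⟨-1, by norm_num, by rw [hx, map_neg, map_one]⟩

section Nontrivial

variable [Nontrivial A]

lemma isImaginary_algebraMap_iff {r : k} : IsImaginary k (algebraMap k A r) ↔ r = 0 := by
  refine ⟨fun ⟨c, hc, hrr⟩ => ?_, by rintro rfl; simpa using isImaginary_zero⟩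
  rw [← map_mul] at hrr
  have : r * r ≤ 0 := (algebraMap k A).injective hrr ▸ hc
  exact mul_self_eq_zero.mp (le_antisymm this (mul_self_nonneg r))

lemma IsImaginary.eq_zero_of_eq_algebraMap {x : A} (hx : IsImaginary k x) {d : k}
    (h : x = algebraMap k A d) : x = 0 := by
  subst h
  rw [isImaginary_algebraMap_iff.mp hx, map_zero]

lemma IsImaginary.eq_smul_of_eq_algebraMap_add_smul {x y : A} (hx : IsImaginary k x)
    (hy : IsImaginary k y) {α β : k} (h : x = algebraMap k A α + β • y) : x = β • y := by
  obtain ⟨cx, -, hxx⟩ := id hx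
  obtain ⟨cy, -, hyy⟩ := id hy
  have key : (2 * α * β) • y = algebraMap k A (cx - α * α - β * β * cy) := by
    rw [h] at hxx
    simp only [Algebra.algebraMap_eq_smul_one, add_mul, mul_add, smul_mul_smul_comm, one_mul,
      mul_one, hyy] at hxx ⊢
    linear_combination (norm := module) hxx
  have hα : α = 0 := by
    rcases smul_eq_zero.mp ((hy.smul _).eq_zero_of_eq_algebraMap key) with h0 | rfl
    · rcases mul_eq_zero.mp h0 with h0 | rfl
      · exact (mul_eq_zero.mp h0).resolve_left two_ne_zero
      · exact isImaginary_algebraMap_iff.mp (by simpa [h] using hx)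
    · exact isImaginary_algebraMap_iff.mp (by simpa [h] using hx)
  rw [h, hα, map_zero, zero_add]

lemma IsImaginary.eq_zero_of_smul_add_smul_eq_algebraMap {x y : A} (hx : IsImaginary k x)
    (hy : IsImaginary k y) (hx0 : x ≠ 0) (hyx : ∀ t : k, y ≠ t • x) {a b d : k}
    (h : a • x + b • y = algebraMap k A d) : a = 0 ∧ b = 0 := by
  have hb : b = 0 := by
    by_contra hb
    have hby : b • y = (-a) • x :=
      (hy.smul b).eq_smul_of_eq_algebraMap_add_smul hx (by rw [← h]; module)
    exact hyx (b⁻¹ * -a) (by rw [mul_smul, ← hby, smul_smul, inv_mul_cancel₀ hb, one_smul])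
  subst hb
  rw [zero_smul, add_zero] at h
  exact ⟨(smul_eq_zero.mp ((hx.smul a).eq_zero_of_eq_algebraMap h)).resolve_right hx0, rfl⟩

end Nontrivial

lemma anticommute_add_half_smul {e v : A} (he : e * e = -1) {t : k}
    (hv : v * e + e * v = algebraMap k A t) :
    (v + (t / 2) • e) * e + e * (v + (t / 2) • e) = 0 := by
  simp only [add_mul, mul_add, smul_mul_assoc, mul_smul_comm, he, Algebra.algebraMap_eq_smul_one]
    at hv ⊢
  linear_combination (norm := module) hv

lemma eq_zero_of_anticommute (q : QuaternionAlgebra.Basis A (-1 : k) 0 (-1)) {w : A}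
    (hi : w * q.i + q.i * w = 0) (hj : w * q.j + q.j * w = 0) (hk : w * q.k + q.k * w = 0) :
    w = 0 := by
  have hwk : w * q.k = q.k * w := by
    rw [← q.i_mul_j, ← mul_assoc, eq_neg_of_add_eq_zero_left hi, neg_mul, mul_assoc,
      eq_neg_of_add_eq_zero_left hj, mul_neg, neg_neg, mul_assoc]
  have hkw : q.k * w = 0 := by
    rw [hwk, ← two_smul k] at hk
    exact (smul_eq_zero.mp hk).resolve_left two_ne_zero
  calc w = -(q.k * q.k) * w := by simp
    _ = 0 := by rw [neg_mul, mul_assoc, hkw, mul_zero, neg_zero]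

section Domain

variable [IsDomain A]

lemma exists_eq_algebraMap_add_isImaginary (hsq : ∀ c : k, 0 ≤ c → IsSquare c) {x : A}
    (hx : ∃ b c : k, x * x = b • x + algebraMap k A c) :
    ∃ (r : k) (v : A), IsImaginary k v ∧ x = algebraMap k A r + v := by
  obtain ⟨b, c, hxx⟩ := hx
  have hw : (x - algebraMap k A (b / 2)) * (x - algebraMap k A (b / 2)) =
      algebraMap k A (c + b / 2 * (b / 2)) := by
    simp only [Algebra.algebraMap_eq_smul_one, sub_mul, mul_sub, one_mul, mul_one, smul_mul_assoc,
      mul_smul_comm] at hxx ⊢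
    linear_combination (norm := module) hxx
  rcases isImaginary_or_exists_eq_algebraMap hsq hw with hv | ⟨r, hr⟩
  · exact ⟨b / 2, _, hv, by abel⟩
  · exact ⟨b / 2 + r, 0, isImaginary_zero, by rw [map_add, ← hr]; abel⟩

theorem IsImaginary.add (hsq : ∀ c : k, 0 ≤ c → IsSquare c)
    (hquad : ∀ x : A, ∃ b c : k, x * x = b • x + algebraMap k A c) {x y : A}
    (hx : IsImaginary k x) (hy : IsImaginary k y) : IsImaginary k (x + y) := by
  by_cases hx0 : x = 0
  · simpa [hx0] using hy
  by_cases hyx : ∃ t : k, y = t • x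
  · obtain ⟨t, rfl⟩ := hyx
    simpa [add_smul] using hx.smul (1 + t)
  push Not at hyx
  have indep : ∀ {a b d : k}, a • x + b • y = algebraMap k A d → a = 0 ∧ b = 0 :=
    hx.eq_zero_of_smul_add_smul_eq_algebraMap hy hx0 hyx
  obtain ⟨cx, -, hxx⟩ := hx
  obtain ⟨cy, -, hyy⟩ := hy
  obtain ⟨p, q, hp⟩ := hquad (x + y)
  obtain ⟨p', q', hp'⟩ := hquad (x - y)
  -- `(x + y)² + (x - y)² = 2x² + 2y²` is a scalar, which forces `p = p' = 0`
  have hsum : (p + p') • x + (p - p') • y = algebraMap k A (2 * cx + 2 * cy - q - q') := by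
    have h2 : (x + y) * (x + y) + (x - y) * (x - y) = x * x + x * x + (y * y + y * y) := by
      noncomm_ring
    rw [hp, hp', hxx, hyy] at h2
    simp only [Algebra.algebraMap_eq_smul_one] at h2 ⊢
    linear_combination (norm := module) h2
  obtain ⟨hpp, hpp'⟩ := indep hsum
  rw [show p = 0 by linarith, zero_smul, zero_add] at hp
  rcases isImaginary_or_exists_eq_algebraMap hsq hp with h | ⟨r, hr⟩
  · exact h
  · exact absurd (indep (a := 1) (b := 1) (by simpa using hr)).1 one_ne_zero

lemma IsImaginary.exists_mul_add_mul_eq_algebraMap (hsq : ∀ c : k, 0 ≤ c → IsSquare c)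
    (hquad : ∀ x : A, ∃ b c : k, x * x = b • x + algebraMap k A c) {x y : A}
    (hx : IsImaginary k x) (hy : IsImaginary k y) :
    ∃ t : k, x * y + y * x = algebraMap k A t := by
  obtain ⟨c, -, hxy⟩ := hx.add hsq hquad hy
  obtain ⟨cx, -, hxx⟩ := hx
  obtain ⟨cy, -, hyy⟩ := hy
  refine ⟨c - cx - cy, ?_⟩
  rw [map_sub, map_sub, ← hxy, ← hxx, ← hyy]
  noncomm_ring

lemma IsImaginary.exists_smul_mul_self_eq_neg_one (hsq : ∀ c : k, 0 ≤ c → IsSquare c) {x : A}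
    (hx : IsImaginary k x) (hx0 : x ≠ 0) : ∃ s : k, s • x * s • x = -1 := by
  obtain ⟨c, hc, hxx⟩ := hx
  have hc0 : c ≠ 0 := by
    rintro rfl
    exact hx0 (mul_self_eq_zero.mp (by rw [hxx, map_zero]))
  obtain ⟨s, hs⟩ := hsq (-c) (by linarith)
  have hs0 : s ≠ 0 := by rintro rfl; exact hc0 (by linarith)
  refine ⟨s⁻¹, ?_⟩
  rw [smul_mul_smul_comm, hxx, Algebra.smul_def, ← map_mul, show c = -(s * s) by linarith]
  field_simp
  simp

lemma nonempty_quaternionBasis (hsq : ∀ c : k, 0 ≤ c → IsSquare c)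
    (hquad : ∀ x : A, ∃ b c : k, x * x = b • x + algebraMap k A c) {i y : A} (hi : i * i = -1)
    (hy : IsImaginary k y) (hyi : ∀ t : k, y ≠ t • i) :
    Nonempty (QuaternionAlgebra.Basis A (-1 : k) 0 (-1)) := by
  have hi' : IsImaginary k i := isImaginary_of_mul_self_eq_neg_one hi
  obtain ⟨t, ht⟩ := hy.exists_mul_add_mul_eq_algebraMap hsq hquad hi'
  set y' := y + (t / 2) • i
  have hy'i : y' * i + i * y' = 0 := anticommute_add_half_smul hi ht
  have hy'0 : y' ≠ 0 := fun h0 =>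
    hyi (-(t / 2)) (by rw [neg_smul]; exact eq_neg_of_add_eq_zero_left h0)
  obtain ⟨s, hj⟩ := (hy.add hsq hquad (hi'.smul _)).exists_smul_mul_self_eq_neg_one hsq hy'0
  exact ⟨{
    i := i
    j := s • y'
    k := i * s • y'
    i_mul_i := by simp [hi]
    j_mul_j := by rw [hj, neg_one_smul]
    i_mul_j := rfl
    j_mul_i := by
      simp only [smul_mul_assoc, mul_smul_comm]
      linear_combination (norm := module) s • hy'i }⟩

lemma exists_eq_smul_add_smul_add_smul_of_isImaginary (hsq : ∀ c : k, 0 ≤ c → IsSquare c)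
    (hquad : ∀ x : A, ∃ b c : k, x * x = b • x + algebraMap k A c)
    (q : QuaternionAlgebra.Basis A (-1 : k) 0 (-1)) {v : A} (hv : IsImaginary k v) :
    ∃ a b c : k, v = a • q.i + b • q.j + c • q.k := by
  have hi : IsImaginary k q.i := isImaginary_of_mul_self_eq_neg_one (by simp)
  have hj : IsImaginary k q.j := isImaginary_of_mul_self_eq_neg_one (by simp)
  have hk : IsImaginary k q.k := isImaginary_of_mul_self_eq_neg_one (by simp)
  obtain ⟨a, ha⟩ := hv.exists_mul_add_mul_eq_algebraMap hsq hquad hi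
  obtain ⟨b, hb⟩ := hv.exists_mul_add_mul_eq_algebraMap hsq hquad hj
  obtain ⟨c, hc⟩ := hv.exists_mul_add_mul_eq_algebraMap hsq hquad hk
  have hw := eq_zero_of_anticommute q (w := v + (a / 2) • q.i + (b / 2) • q.j + (c / 2) • q.k)
    ?_ ?_ ?_
  · exact ⟨-(a / 2), -(b / 2), -(c / 2), by linear_combination (norm := module) hw⟩
  all_goals
    simp only [Algebra.algebraMap_eq_smul_one, add_mul, mul_add, smul_mul_assoc, mul_smul_comm,
      QuaternionAlgebra.Basis.i_mul_i, QuaternionAlgebra.Basis.j_mul_j,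
      QuaternionAlgebra.Basis.k_mul_k, QuaternionAlgebra.Basis.i_mul_j,
      QuaternionAlgebra.Basis.j_mul_i, QuaternionAlgebra.Basis.i_mul_k,
      QuaternionAlgebra.Basis.k_mul_i, QuaternionAlgebra.Basis.j_mul_k,
      QuaternionAlgebra.Basis.k_mul_j] at ha hb hc ⊢
  · linear_combination (norm := module) ha
  · linear_combination (norm := module) hb
  · linear_combination (norm := module) hc

lemma nonempty_algEquiv_self (hsq : ∀ c : k, 0 ≤ c → IsSquare c)
    (hquad : ∀ x : A, ∃ b c : k, x * x = b • x + algebraMap k A c)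
    (h : ∀ v : A, IsImaginary k v → v = 0) : Nonempty (A ≃ₐ[k] k) := by
  refine ⟨(AlgEquiv.ofBijective (Algebra.ofId k A)
    ⟨(algebraMap k A).injective, fun x => ?_⟩).symm⟩
  obtain ⟨r, v, hv, rfl⟩ := exists_eq_algebraMap_add_isImaginary hsq (hquad x)
  exact ⟨r, by simp [h v hv]⟩

lemma nonempty_algEquiv_quotient (hsq : ∀ c : k, 0 ≤ c → IsSquare c)
    (hquad : ∀ x : A, ∃ b c : k, x * x = b • x + algebraMap k A c) {i : A} (hi : i * i = -1)
    (h : ∀ v : A, IsImaginary k v → ∃ t : k, v = t • i) :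
    Nonempty (A ≃ₐ[k] (k[X] ⧸ Ideal.span {(X : k[X]) ^ 2 + 1})) := by
  have : (Ideal.span {(X ^ 2 + 1 : k[X])}).IsMaximal :=
    PrincipalIdealRing.isMaximal_of_irreducible (irreducible_X_sq_add_one k)
  let := Ideal.Quotient.field (Ideal.span {(X ^ 2 + 1 : k[X])})
  let φ := Ideal.Quotient.liftₐ (Ideal.span {(X ^ 2 + 1 : k[X])}) (aeval i) fun p hp => by
    obtain ⟨q, rfl⟩ := Ideal.mem_span_singleton'.mp hp
    simp [pow_two, hi]
  refine ⟨(AlgEquiv.ofBijective φ ⟨φ.toRingHom.injective, fun x => ?_⟩).symm⟩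
  obtain ⟨r, v, hv, rfl⟩ := exists_eq_algebraMap_add_isImaginary hsq (hquad x)
  obtain ⟨t, rfl⟩ := h v hv
  refine ⟨Ideal.Quotient.mk _ (C r + C t * X), ?_⟩
  change aeval i (C r + C t * X) = _
  simp [Algebra.smul_def]

lemma nonempty_algEquiv_quaternion (hsq : ∀ c : k, 0 ≤ c → IsSquare c)
    (hquad : ∀ x : A, ∃ b c : k, x * x = b • x + algebraMap k A c)
    (q : QuaternionAlgebra.Basis A (-1 : k) 0 (-1)) :
    Nonempty (A ≃ₐ[k] QuaternionAlgebra k (-1) 0 (-1)) := by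
  refine ⟨(AlgEquiv.ofBijective q.liftHom
    ⟨(show Quaternion k →+* A from q.liftHom.toRingHom).injective, fun x => ?_⟩).symm⟩
  obtain ⟨r, v, hv, rfl⟩ := exists_eq_algebraMap_add_isImaginary hsq (hquad x)
  obtain ⟨a, b, c, rfl⟩ := exists_eq_smul_add_smul_add_smul_of_isImaginary hsq hquad q hv
  exact ⟨⟨r, a, b, c⟩, by simp [QuaternionAlgebra.Basis.lift, add_assoc]⟩

theorem nonempty_algEquiv (hsq : ∀ c : k, 0 ≤ c → IsSquare c)
    (hquad : ∀ x : A, ∃ b c : k, x * x = b • x + algebraMap k A c) :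
    Nonempty (A ≃ₐ[k] k) ∨
      Nonempty (A ≃ₐ[k] (k[X] ⧸ Ideal.span {(X : k[X]) ^ 2 + 1})) ∨
      Nonempty (A ≃ₐ[k] QuaternionAlgebra k (-1) 0 (-1)) := by
  by_cases h₀ : ∀ v : A, IsImaginary k v → v = 0
  · exact Or.inl (nonempty_algEquiv_self hsq hquad h₀)
  push Not at h₀
  obtain ⟨v, hv, hv0⟩ := h₀
  obtain ⟨s, hi⟩ := hv.exists_smul_mul_self_eq_neg_one hsq hv0
  by_cases h₁ : ∀ w : A, IsImaginary k w → ∃ t : k, w = t • s • v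
  · exact Or.inr (Or.inl (nonempty_algEquiv_quotient hsq hquad hi h₁))
  push Not at h₁
  obtain ⟨y, hy, hyi⟩ := h₁
  obtain ⟨q⟩ := nonempty_quaternionBasis hsq hquad hi hy hyi
  exact Or.inr (Or.inr (nonempty_algEquiv_quaternion hsq hquad q))

end Domain

end Imaginary

variable {k : Subfield ℝ}

lemma isSquare_of_nonneg (halg : ∀ x : ℝ, IsAlgebraic k x → x ∈ k) (c : k) (hc : 0 ≤ c) :
    IsSquare c := by
  have hsqrt : IsAlgebraic k √(c : ℝ) :=
    IsAlgebraic.of_pow two_pos (by rw [Real.sq_sqrt hc]; exact isAlgebraic_algebraMap c)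
  exact ⟨⟨_, halg _ hsqrt⟩, Subtype.ext (Real.mul_self_sqrt hc).symm⟩

lemma natDegree_le_two_of_irreducible (halg : ∀ x : ℝ, IsAlgebraic k x → x ∈ k) {p : k[X]}
    (hp : Irreducible p) : p.natDegree ≤ 2 := by
  obtain ⟨z, hz⟩ := IsAlgClosed.exists_aeval_eq_zero ℂ p (degree_pos_of_irreducible hp).ne'
  have hzk : IsIntegral k z := IsAlgebraic.isIntegral ⟨p, hp.ne_zero, hz⟩
  have hconj : IsIntegral k (starRingEnd ℂ z) :=
    hzk.map (Complex.conjAe.toAlgHom.restrictScalars k)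
  have mem : ∀ r : ℝ, IsIntegral k (r : ℂ) → r ∈ k := fun r hr => halg r
    ((isIntegral_algHom_iff ((Algebra.ofId ℝ ℂ).restrictScalars k) Complex.ofReal_injective).mp
      hr).isAlgebraic
  -- `z` is a root of `(X - z) (X - z̄)`, whose coefficients are real and integral over `k`
  have hre := mem _ (Complex.add_conj z ▸ hzk.add hconj)
  have hnorm := mem _ (Complex.mul_conj z ▸ hzk.mul hconj)
  let q : k[X] := X ^ 2 - C ⟨_, hre⟩ * X + C ⟨_, hnorm⟩
  have hqz : aeval z q = 0 := by
    have h1 : algebraMap k ℂ ⟨_, hre⟩ = z + starRingEnd ℂ z := (Complex.add_conj z).symm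
    have h2 : algebraMap k ℂ ⟨_, hnorm⟩ = z * starRingEnd ℂ z := (Complex.mul_conj z).symm
    simp only [q, map_add, map_sub, map_mul, aeval_X_pow, aeval_X, aeval_C, h1, h2]
    ring
  calc p.natDegree = (minpoly k z).natDegree := by
        rw [← minpoly.eq_of_irreducible hp hz, natDegree_mul_C]
        exact inv_ne_zero (leadingCoeff_ne_zero.mpr hp.ne_zero)
    _ ≤ q.natDegree :=
        natDegree_le_natDegree (minpoly.min k z (by dsimp only [q]; monicity!) hqz)
    _ = 2 := by dsimp only [q]; compute_degree!

end Frobenius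

/-- Let `k` be a subfield of `ℝ` that is algebraically closed in `ℝ`, and let `A` be a
nontrivial finite-dimensional `k`-algebra. Then either `A` has a zero-divisor, or `A`
is isomorphic as a `k`-algebra to `k`, to `k[X]/(X² + 1)`, or to the quaternion algebra
over `k`. -/
theorem frobenius_like_theorem_over_real_closed_subfield
    (k : Subfield ℝ)
    (halg : ∀ x : ℝ, (∃ p : Polynomial k, p ≠ 0 ∧ Polynomial.aeval x p = 0) → x ∈ k)
    {A : Type} [Ring A] [Algebra k A] [FiniteDimensional k A] [Nontrivial A] :
    (∃ x y : A, x ≠ 0 ∧ y ≠ 0 ∧ x * y = 0) ∨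
    Nonempty (A ≃ₐ[k] k) ∨
    Nonempty (A ≃ₐ[k] (Polynomial k ⧸ Ideal.span {(X : Polynomial k) ^ 2 + 1})) ∨
    Nonempty (A ≃ₐ[k] QuaternionAlgebra k (-1) 0 (-1)) := by
  by_cases hzd : ∃ x y : A, x ≠ 0 ∧ y ≠ 0 ∧ x * y = 0
  · exact Or.inl hzd
  have : NoZeroDivisors A :=
    ⟨fun {x y} hxy => by by_contra! h; exact hzd ⟨x, y, h.1, h.2, hxy⟩⟩
  have := NoZeroDivisors.to_isDomain A
  refine Or.inr (Frobenius.nonempty_algEquiv (Frobenius.isSquare_of_nonneg halg) fun x => ?_)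
  have hx := IsIntegral.of_finite k x
  exact Frobenius.exists_mul_self_eq_of_natDegree_minpoly_le_two hx
    (Frobenius.natDegree_le_two_of_irreducible halg (minpoly.irreducible hx))
end
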